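/- arXiv:2211.06068 — 8 statements merged into one kernel-verified Lean document; each statement's English description precedes it below -/
import Mathlib

section
/- Let F be a finite reduced collection of forbidden words over a finite alphabet Σ, Σ_F the associated subshift of finite type with language L = ∪_n L_n, and R = {r_1(m_1),…,r_ℓ(m_ℓ)} a reduced collection of allowed words with assigned integer multiplicities m_j ≥ 2. Define the multiplicity of an allowed word w as m(w) = ∏_j m_j^{n(w;r_j)}, where n(w;r_j) is the number of occurrences of r_j as a subword of w. If X = x_1…x_n and Y = y_1…y_n are allowed words with x_2…x_n = y_1…y_{n-1}, and the concatenated word X*Y = x_1…x_n y_n is allowed and is not itself an element of R, then m(X*Y) = m(X)·m(Y)/m(x_2…x_n). -/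
/-- Number of occurrences of `r` as a contiguous subword of `w`. -/
def occ {α : Type*} [DecidableEq α] (w r : List α) : ℕ :=
  ((Finset.range (w.length + 1)).filter fun i => r <+: w.drop i).card

/-- `w` avoids every word of the forbidden collection `F`. -/
def Allowed {α : Type*} (F : Finset (List α)) (w : List α) : Prop :=
  ∀ a ∈ F, ¬ a <:+: w

instance {α : Type*} [DecidableEq α] (F : Finset (List α)) (w : List α) :
    Decidable (Allowed F w) := by
  unfold Allowed; infer_instance

/-- Multiplicity of a word with respect to forbidden collection `F` and repeated words
`R` with multiplicities `m`: `m(w) = ∏_j m_j ^ (number of occurrences of r_j in w)` for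
allowed `w`, and `0` otherwise. -/
def mult {α : Type*} [DecidableEq α] (F : Finset (List α)) {ℓ : ℕ}
    (R : Fin ℓ → List α) (m : Fin ℓ → ℕ) (w : List α) : ℕ :=
  if Allowed F w then ∏ j, m j ^ occ w (R j) else 0

/-- Overlap-concatenation `X*Y = x₁…xₙyₙ` of two words of equal length `n`
(meaningful when `X.tail = Y.dropLast`). -/
def star {α : Type*} (X Y : List α) : List α := X ++ Y.drop (Y.length - 1)

lemma occ_cons {α : Type*} [DecidableEq α] (a : α) (u r : List α) :
    occ (a :: u) r = occ u r + (if r <+: a :: u then 1 else 0) := by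
  unfold occ
  rw [Finset.card_filter, Finset.card_filter]
  have : (a :: u).length + 1 = (u.length + 1) + 1 := by simp
  rw [this, Finset.sum_range_succ']
  simp [add_comm]

/-- if `X = x₁…xₙ` and `Y = y₁…yₙ` are allowed words with
`x₂…xₙ = y₁…y_{n-1}` and the overlap-concatenation `X*Y = x₁…xₙyₙ` is allowed and is not
itself a member of the repeated collection `R`, then `m(X*Y) = m(X)·m(Y)/m(x₂…xₙ)`. -/
theorem mult_star {α : Type*} [DecidableEq α] (F : Finset (List α)) {ℓ : ℕ}
    (R : Fin ℓ → List α) (m : Fin ℓ → ℕ)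
    (hm : ∀ j, 2 ≤ m j)
    (hFred : ∀ a ∈ F, ∀ b ∈ F, a ≠ b → ¬ a <:+: b)
    (hRallowed : ∀ j, Allowed F (R j)) (hRne : ∀ j, R j ≠ [])
    (hRred : ∀ j k, j ≠ k → ¬ R j <:+: R k)
    (n : ℕ) (hn : 2 ≤ n) (X Y : List α) (hX : X.length = n) (hY : Y.length = n)
    (hXa : Allowed F X) (hYa : Allowed F Y)
    (hover : X.tail = Y.dropLast)
    (hstar : Allowed F (star X Y))
    (hnotR : ∀ j, star X Y ≠ R j) :
    (mult F R m (star X Y) : ℚ) =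
      (mult F R m X : ℚ) * (mult F R m Y : ℚ) / (mult F R m X.tail : ℚ) := by
  -- X is nonempty
  obtain ⟨a, t, rfl⟩ : ∃ a t, X = a :: t := by
    cases X with
    | nil => simp at hX; omega
    | cons a t => exact ⟨a, t, rfl⟩
  simp only [List.tail_cons] at hover ⊢
  -- star X Y = a :: Y
  have hstar_eq : _root_.star (a :: t) Y = a :: Y := by
    unfold _root_.star
    rw [List.cons_append]
    congr 1
    rw [hover, List.dropLast_eq_take]
    exact List.take_append_drop _ Y
  rw [hstar_eq] at hstar hnotR ⊢
  -- lengths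
  have hWlen : (a :: Y).length = n + 1 := by simp [hY]
  -- prefix equivalence
  have hpref : ∀ j, (R j <+: a :: Y) ↔ (R j <+: a :: t) := by
    intro j
    constructor
    · intro h
      have hle : (R j).length ≤ n := by
        have := h.length_le
        rw [hWlen] at this
        rcases Nat.lt_or_ge (R j).length (n + 1) with h' | h'
        · omega
        · exfalso
          exact hnotR j (h.eq_of_length (by omega)).symm
      have : R j <+: (a :: Y).take n := by
        rw [List.prefix_take_iff]; exact ⟨h, hle⟩
      have htake : (a :: Y).take n = a :: t := by
        have : (a :: t) <+: (a :: Y) := by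
          rw [List.cons_prefix_cons]
          refine ⟨rfl, ?_⟩
          rw [hover, List.dropLast_eq_take]
          exact List.take_prefix _ _
        rw [List.prefix_iff_eq_take] at this
        simpa [hX] using this.symm
      rwa [htake] at this
    · intro h
      refine h.trans ?_
      rw [List.cons_prefix_cons]
      refine ⟨rfl, ?_⟩
      rw [hover, List.dropLast_eq_take]
      exact List.take_prefix _ _
  -- key occ identity
  have hocc : ∀ j, occ (a :: Y) (R j) + occ t (R j) = occ (a :: t) (R j) + occ Y (R j) := by
    intro j
    rw [occ_cons, occ_cons]
    simp only [hpref j]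
    omega
  -- Allowed for t
  have hta : Allowed F t := fun b hb hbt =>
    hXa b hb (hbt.trans (List.tail_suffix (a :: t)).isInfix)
  -- unfold mult
  rw [mult, mult, mult, mult, if_pos hstar, if_pos hXa, if_pos hYa, if_pos hta]
  have htpos : (0 : ℚ) < ∏ j, (m j : ℚ) ^ occ t (R j) := by
    apply Finset.prod_pos
    intro j _
    have h1 : 0 < m j := by have := hm j; omega
    exact pow_pos (by exact_mod_cast h1) _
  push_cast [htpos]
  rw [eq_div_iff (ne_of_gt htpos), ← Finset.prod_mul_distrib, ← Finset.prod_mul_distrib]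
  apply Finset.prod_congr rfl
  intro j _
  rw [← pow_add, ← pow_add, hocc j]
end

section
/- Let F be a finite reduced forbidden collection and R a nonempty reduced collection of repeated words with multiplicities m_j ≥ 2, over a finite alphabet Σ, such that the subshift Σ_F is irreducible. Let |Λ_n| = ∑_{w ∈ L_n} m(w) be the total multiplicity-weighted count of allowed words of length n. Then limsup_{n→∞} (1/n) ln |Λ_n| > 0; more precisely, if r ∈ R has multiplicity m ≥ 2 and s is an allowed word of length p containing r such that s w s is allowed for some word w, then limsup_{n→∞} (1/n) ln |Λ_n| ≥ ln(m)/(|s|+|w|). -/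
/-- Total multiplicity-weighted count `|Λ_n| = ∑_{w ∈ L_n} m(w)` of allowed words of
length `n` (non-allowed words contribute `0`). -/
def lamCard {α : Type*} [DecidableEq α] [Fintype α] (F : Finset (List α)) {ℓ : ℕ}
    (R : Fin ℓ → List α) (m : Fin ℓ → ℕ) (n : ℕ) : ℕ :=
  ∑ f : Fin n → α, mult F R m (List.ofFn f)

/- ### Auxiliary material -/

namespace SftAux

variable {α : Type*}

lemma prefix_of_prefix_length_le' {l₁ l₂ l₃ : List α} (h₁ : l₁ <+: l₃) (h₂ : l₂ <+: l₃)
    (h : l₁.length ≤ l₂.length) : l₁ <+: l₂ := by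
  rw [List.prefix_iff_eq_take] at h₁ h₂ ⊢
  rw [h₂, List.take_take, min_eq_left h, ← h₁]

lemma infix_of_prefix_drop {a l : List α} {i : ℕ} (h : a <+: l.drop i) : a <:+: l := by
  obtain ⟨t, ht⟩ := h
  exact ⟨l.take i, t, by rw [List.append_assoc, ht, List.take_append_drop]⟩

lemma infix_drop_exists {a l : List α} (h : a <:+: l) : ∃ i, a <+: l.drop i := by
  obtain ⟨u, t, h⟩ := h
  refine ⟨u.length, t, ?_⟩
  rw [← h, List.append_assoc, List.drop_left]

/-- The word `(s ++ w)^k ++ s`, defined by recursion at the right end. -/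
def blk (s w : List α) : ℕ → List α
  | 0 => s
  | k + 1 => blk s w k ++ w ++ s

lemma blk_length (s w : List α) (k : ℕ) :
    (blk s w k).length = s.length + k * (w.length + s.length) := by
  induction k with
  | zero => simp [blk]
  | succ k ih => simp only [blk, List.length_append, ih]; ring

lemma blk_succ_left (s w : List α) (k : ℕ) : blk s w (k + 1) = s ++ w ++ blk s w k := by
  induction k with
  | zero => simp [blk]
  | succ k ih =>
      calc blk s w (k + 1 + 1) = blk s w (k + 1) ++ w ++ s := rfl
        _ = s ++ w ++ blk s w k ++ w ++ s := by rw [ih]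
        _ = s ++ w ++ (blk s w k ++ w ++ s) := by simp [List.append_assoc]
        _ = s ++ w ++ blk s w (k + 1) := rfl

lemma blk_prefix_succ (s w : List α) (k : ℕ) : blk s w k <+: blk s w (k + 1) :=
  ⟨w ++ s, by simp [blk, List.append_assoc]⟩

lemma blk_prefix_le (s w : List α) : ∀ {j k : ℕ}, j ≤ k → blk s w j <+: blk s w k := by
  intro j k hjk
  induction k with
  | zero => simp_all
  | succ k ih =>
      rcases Nat.eq_or_lt_of_le hjk with rfl | h
      · exact List.prefix_refl _
      · exact (ih (by omega)).trans (blk_prefix_succ s w k)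

lemma s_prefix_blk (s w : List α) (k : ℕ) : s <+: blk s w k :=
  blk_prefix_le s w (Nat.zero_le k)

lemma blk_drop (s w : List α) (k i : ℕ) :
    (blk s w (k + 1)).drop (s.length + w.length + i) = (blk s w k).drop i := by
  rw [blk_succ_left,
    show s ++ w ++ blk s w k = (s ++ w) ++ blk s w k from by simp [List.append_assoc],
    show s.length + w.length + i = (s ++ w).length + i from by simp,
    List.drop_append]
  simp

lemma blk_drop_mul (s w : List α) (j : ℕ) :
    ∀ i k, i ≤ k →
      (blk s w k).drop (i * (s.length + w.length) + j) = (blk s w (k - i)).drop j := by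
  intro i
  induction i with
  | zero => simp
  | succ i ih =>
      intro k hk
      obtain ⟨k', rfl⟩ : ∃ k', k = k' + 1 := ⟨k - 1, by omega⟩
      rw [show (i + 1) * (s.length + w.length) + j
          = s.length + w.length + (i * (s.length + w.length) + j) from by ring,
        blk_drop, ih k' (by omega)]
      congr 2
      omega

lemma blk_infix (s w : List α) :
    ∀ k (a : List α), a.length ≤ s.length → a <:+: blk s w k → a <:+: blk s w 1 := by
  intro k
  induction k with
  | zero =>
      intro a _ h
      exact h.trans (s_prefix_blk s w 1).isInfix
  | succ k ih =>
      intro a ha h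
      obtain ⟨i, hpre⟩ := infix_drop_exists h
      by_cases hi : s.length + w.length ≤ i
      · obtain ⟨j, rfl⟩ : ∃ j, i = s.length + w.length + j := ⟨i - (s.length + w.length), by omega⟩
        rw [blk_drop] at hpre
        exact ih a ha (infix_of_prefix_drop hpre)
      · have h1 : blk s w 1 <+: blk s w (k + 1) := blk_prefix_le s w (by omega)
        have h2 : (blk s w 1).drop i <+: (blk s w (k + 1)).drop i := h1.drop i
        have hlen : a.length ≤ ((blk s w 1).drop i).length := by
          rw [List.length_drop, blk_length]
          omega
        exact infix_of_prefix_drop (prefix_of_prefix_length_le' hpre h2 hlen)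

lemma blk_allowed {F : Finset (List α)} {s w : List α}
    (hFlen : ∀ a ∈ F, a.length ≤ s.length) (h1 : Allowed F (blk s w 1)) (k : ℕ) :
    Allowed F (blk s w k) :=
  fun a ha hinf => h1 a ha (blk_infix s w k a (hFlen a ha) hinf)

lemma occ_blk_ge [DecidableEq α] {s w r : List α} {t : ℕ} (hs1 : 1 ≤ s.length)
    (ht : t ≤ s.length) (hrt : r <+: s.drop t) (k : ℕ) :
    k + 1 ≤ occ (blk s w k) r := by
  set q := s.length + w.length with hq
  have hq1 : 1 ≤ q := by omega
  have key : ∀ i ≤ k, r <+: (blk s w k).drop (i * q + t) := by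
    intro i hi
    rw [blk_drop_mul s w t i k hi]
    exact hrt.trans ((s_prefix_blk s w (k - i)).drop t)
  have hsub : (Finset.range (k + 1)).image (fun i => i * q + t) ⊆
      (Finset.range ((blk s w k).length + 1)).filter fun i => r <+: (blk s w k).drop i := by
    intro x hx
    simp only [Finset.mem_image, Finset.mem_range] at hx
    obtain ⟨i, hi, rfl⟩ := hx
    have hi' : i ≤ k := by omega
    refine Finset.mem_filter.mpr ⟨Finset.mem_range.mpr ?_, key i hi'⟩
    rw [blk_length]
    have h1 : i * q ≤ k * q := Nat.mul_le_mul_right q hi'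
    have h2 : k * (w.length + s.length) = k * q := by rw [hq]; ring
    omega
  have hcard : ((Finset.range (k + 1)).image (fun i => i * q + t)).card = k + 1 := by
    rw [Finset.card_image_of_injective _ fun a b hab => by
      simpa using Nat.eq_of_mul_eq_mul_right (by omega : 0 < q) (by omega : a * q = b * q)]
    simp
  calc k + 1 = _ := hcard.symm
    _ ≤ _ := Finset.card_le_card hsub

end SftAux

open SftAux Filter in
/-- for an irreducible SFT with a nonempty repeated collection,
`limsup (1/n) ln |Λ_n| > 0`; more precisely, if `r ∈ R` has multiplicity `mr ≥ 2` and `s`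
is an allowed word of length `p` containing `r` such that `s ++ w ++ s` is allowed, then
`limsup (1/n) ln |Λ_n| ≥ ln(mr)/(|s|+|w|)`. -/
theorem limsup_entropy_pos {α : Type*} [DecidableEq α] [Fintype α]
    (F : Finset (List α)) {ℓ : ℕ} (R : Fin ℓ → List α) (m : Fin ℓ → ℕ) (p : ℕ)
    (hm : ∀ j, 2 ≤ m j)
    (hFred : ∀ a ∈ F, ∀ b ∈ F, a ≠ b → ¬ a <:+: b)
    (hRallowed : ∀ j, Allowed F (R j)) (hRne : ∀ j, R j ≠ [])
    (hRred : ∀ j k, j ≠ k → ¬ R j <:+: R k)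
    (hFlen : ∀ a ∈ F, a.length ≤ p) (hRlen : ∀ j, (R j).length ≤ p)
    (hirr : ∀ u v : List α, Allowed F u → Allowed F v →
      ∃ t, Allowed F (u ++ t ++ v))
    (r s w : List α) (j₀ : Fin ℓ) (hr : R j₀ = r) (mr : ℕ) (hmr : m j₀ = mr)
    (hmr2 : 2 ≤ mr)
    (hs : Allowed F s) (hslen : s.length = p) (hrs : r <:+: s)
    (hsws : Allowed F (s ++ w ++ s)) :
    Real.log mr / (s.length + w.length) ≤
        Filter.atTop.limsup (fun n : ℕ => Real.log (lamCard F R m n) / n) ∧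
      0 < Filter.atTop.limsup (fun n : ℕ => Real.log (lamCard F R m n) / n) := by
  classical
  set g : ℕ → ℝ := fun n : ℕ => Real.log (lamCard F R m n) / n with hg
  -- basic positivity facts
  have hrne : r ≠ [] := hr ▸ hRne j₀
  have hrlen : r.length ≤ p := hr ▸ hRlen j₀
  have hp1 : 1 ≤ p := le_trans (List.length_pos_iff.mpr hrne) hrlen
  have hs1 : 1 ≤ s.length := hslen ▸ hp1
  set q : ℕ := s.length + w.length with hqdef
  have hq1 : 1 ≤ q := by omega
  -- position of r inside s
  obtain ⟨u, v, huv⟩ := hrs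
  have ht : u.length ≤ s.length := by
    have := congrArg List.length huv
    simp only [List.length_append] at this
    omega
  have hrt : r <+: s.drop u.length := by
    refine ⟨v, ?_⟩
    rw [← huv, List.append_assoc, List.drop_left]
  -- the blocks are allowed
  have hFlen' : ∀ a ∈ F, a.length ≤ s.length := by rw [hslen]; exact hFlen
  have hblk1 : blk s w 1 = s ++ w ++ s := by simp [blk]
  have hallow : ∀ k, Allowed F (blk s w k) :=
    blk_allowed hFlen' (hblk1 ▸ hsws)
  -- lower bound on lamCard at the block lengths
  have hmult : ∀ k, mr ^ k ≤ mult F R m (blk s w k) := by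
    intro k
    rw [mult, if_pos (hallow k)]
    have h1 : mr ^ k ≤ m j₀ ^ occ (blk s w k) (R j₀) := by
      rw [hmr, hr]
      exact Nat.pow_le_pow_right (by omega)
        (le_trans (by omega) (occ_blk_ge hs1 ht hrt k))
    exact le_trans h1 (Finset.single_le_prod'
      (f := fun j => m j ^ occ (blk s w k) (R j))
      (fun j _ => Nat.one_le_pow (occ (blk s w k) (R j)) (m j) (by have := hm j; omega))
      (Finset.mem_univ j₀))
  have hlam : ∀ k, mr ^ k ≤ lamCard F R m (blk s w k).length := by
    intro k
    refine le_trans (hmult k) ?_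
    have h2 : mult F R m (List.ofFn (blk s w k).get)
        ≤ ∑ f : Fin (blk s w k).length → α, mult F R m (List.ofFn f) :=
      Finset.single_le_sum
        (f := fun f : Fin (blk s w k).length → α => mult F R m (List.ofFn f))
        (fun i _ => Nat.zero_le _) (Finset.mem_univ (blk s w k).get)
    rw [List.ofFn_get] at h2
    exact h2
  -- uniform upper bound on lamCard
  set C : ℕ := ∏ j, m j with hC
  have hC1 : 1 ≤ C := Finset.one_le_prod' fun j _ => by have := hm j; omega
  have hcard1 : 1 ≤ Fintype.card α := by
    have : Nonempty α := ⟨s.head (by intro h; rw [h] at hs1; simp at hs1)⟩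
    exact Fintype.card_pos
  have hub : ∀ n, lamCard F R m n ≤ Fintype.card α ^ n * C ^ (n + 1) := by
    intro n
    have hterm : ∀ f : Fin n → α, mult F R m (List.ofFn f) ≤ C ^ (n + 1) := by
      intro f
      rw [mult]
      split
      · calc ∏ j, m j ^ occ (List.ofFn f) (R j)
            ≤ ∏ j, m j ^ (n + 1) := by
              refine Finset.prod_le_prod' fun j _ => ?_
              refine Nat.pow_le_pow_right (by have := hm j; omega) ?_
              calc occ (List.ofFn f) (R j)
                  ≤ (Finset.range ((List.ofFn f).length + 1)).card := Finset.card_filter_le _ _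
                _ = n + 1 := by simp
          _ = C ^ (n + 1) := by rw [hC, ← Finset.prod_pow]
      · exact Nat.zero_le _
    calc lamCard F R m n ≤ ∑ _f : Fin n → α, C ^ (n + 1) :=
          Finset.sum_le_sum fun f _ => hterm f
      _ = Fintype.card α ^ n * C ^ (n + 1) := by
          rw [Finset.sum_const, Finset.card_univ, smul_eq_mul]
          congr 1
          simp
  set B0 : ℝ := Real.log ((Fintype.card α * C ^ 2 : ℕ) : ℝ) with hB0def
  have hB0 : 0 ≤ B0 := Real.log_natCast_nonneg _
  have hgB : ∀ n, g n ≤ B0 := by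
    intro n
    rcases Nat.eq_zero_or_pos n with rfl | hn
    · simp [hg, hB0]
    rcases Nat.eq_zero_or_pos (lamCard F R m n) with h0 | hpos
    · rw [hg]
      simp only [h0, Nat.cast_zero, Real.log_zero, zero_div]
      exact hB0
    have hle : lamCard F R m n ≤ (Fintype.card α * C ^ 2) ^ n := by
      refine le_trans (hub n) ?_
      rw [mul_pow]
      refine Nat.mul_le_mul_left _ ?_
      rw [← pow_mul]
      exact Nat.pow_le_pow_right hC1 (by omega)
    have hlog : Real.log (lamCard F R m n) ≤ n * B0 := by
      have := Real.log_le_log (by exact_mod_cast hpos)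
        (by exact_mod_cast hle : (lamCard F R m n : ℝ) ≤ ((Fintype.card α * C ^ 2 : ℕ) : ℝ) ^ n)
      rwa [Real.log_pow] at this
    rw [hg, div_le_iff₀ (by exact_mod_cast hn : (0 : ℝ) < n)]
    linarith [hlog]
  have hbdd : Filter.IsBoundedUnder (· ≤ ·) Filter.atTop g :=
    Filter.isBoundedUnder_of ⟨B0, hgB⟩
  -- lengths of the blocks
  set N : ℕ → ℕ := fun k => (blk s w k).length with hN
  have hNval : ∀ k, N k = p + k * q := by
    intro k
    simp only [hN]
    rw [blk_length, hqdef, hslen]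
    ring
  have hNtop : Filter.Tendsto N Filter.atTop Filter.atTop := by
    refine Filter.tendsto_atTop_mono (fun k => ?_) Filter.tendsto_id
    simp only [id_eq]
    rw [hNval]
    have : k * 1 ≤ k * q := Nat.mul_le_mul_left k hq1
    omega
  -- lower bound on g at block lengths
  have hgl : ∀ k : ℕ, (k : ℝ) * Real.log mr / (p + k * q : ℝ) ≤ g (N k) := by
    intro k
    have hden : (0 : ℝ) < (p : ℝ) + k * q := by positivity
    have hlog : (k : ℝ) * Real.log mr ≤ Real.log (lamCard F R m (N k)) := by
      have hcast : ((mr : ℝ)) ^ k ≤ (lamCard F R m (N k) : ℝ) := by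
        exact_mod_cast hlam k
      have := Real.log_le_log (by positivity) hcast
      rwa [Real.log_pow] at this
    simp only [hg]
    have hNcast : ((N k : ℕ) : ℝ) = (p : ℝ) + k * q := by
      rw [hNval]; push_cast; ring
    rw [hNcast]
    gcongr
  -- the limit of the lower bounds
  have hqR : (0 : ℝ) < (q : ℝ) := by exact_mod_cast hq1
  have htend : Filter.Tendsto (fun k : ℕ => (k : ℝ) * Real.log mr / (p + k * q : ℝ))
      Filter.atTop (nhds (Real.log mr / q)) := by
    have h1 : Filter.Tendsto (fun k : ℕ => (p : ℝ) / k + q) Filter.atTop (nhds (0 + q)) :=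
      (tendsto_const_div_atTop_nhds_zero_nat (p : ℝ)).add tendsto_const_nhds
    rw [zero_add] at h1
    have h2 : Filter.Tendsto (fun k : ℕ => Real.log mr / ((p : ℝ) / k + q))
        Filter.atTop (nhds (Real.log mr / q)) :=
      tendsto_const_nhds.div h1 (ne_of_gt hqR)
    refine h2.congr' ?_
    filter_upwards [Filter.eventually_ge_atTop 1] with k hk
    have hk0 : (k : ℝ) ≠ 0 := by
      have : (0 : ℝ) < k := by exact_mod_cast hk
      exact ne_of_gt this
    rw [div_eq_div_iff (by positivity) (by positivity)]
    field_simp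
  -- main limsup bound
  have hmain : Real.log mr / (q : ℝ) ≤ Filter.atTop.limsup g := by
    refine le_of_forall_lt fun d hd => ?_
    obtain ⟨d', hdd', hd'c⟩ := exists_between hd
    have hev : ∀ᶠ k : ℕ in Filter.atTop, d' < (k : ℝ) * Real.log mr / (p + k * q : ℝ) :=
      htend.eventually (eventually_gt_nhds hd'c)
    have hev2 : ∀ᶠ k in Filter.atTop, d' ≤ g (N k) :=
      hev.mono fun k hk => le_trans hk.le (hgl k)
    have hfreq : ∃ᶠ n in Filter.atTop, d' ≤ g n := by
      have hfm : ∃ᶠ n in Filter.map N Filter.atTop, d' ≤ g n :=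
        Filter.frequently_map.mpr hev2.frequently
      exact hfm.filter_mono hNtop
    exact lt_of_lt_of_le hdd' (Filter.le_limsup_of_frequently_le hfreq hbdd)
  have hcq : Real.log mr / ((s.length : ℝ) + (w.length : ℝ)) = Real.log mr / (q : ℝ) := by
    rw [hqdef]; push_cast; ring
  have hcpos : 0 < Real.log mr / (q : ℝ) := by
    refine div_pos (Real.log_pos ?_) hqR
    exact_mod_cast by omega
  refine ⟨?_, ?_⟩
  · rw [hcq]; exact hmain
  · exact lt_of_lt_of_le hcpos hmain
end

section
/- Let F and R be reduced collections as above with p the length of the longest word in F ∪ R, and suppose every word of R has length exactly p. Define A indexed by allowed words of length p-1 by A_{XY} = m(X*Y) when X*Y is allowed of length p, else 0. Then for every n ≥ p and every allowed word w = x_1…x_n, the multiplicity m(w) equals the number of edge-paths in the multigraph of A through the vertices X_1,…,X_{n-p+2} in order, where X_i = x_i…x_{i+p-2}; equivalently m(w) = ∏_{i=1}^{n-p+1} A_{X_i X_{i+1}}. -/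
/-- Entry of the adjacency matrix associated with `F` and `R` (all repeated words of
length `p`): `A X Y = m(X*Y)` if `X*Y` is an allowed word of length `p`, else `0`. -/
def Aent {α : Type*} [DecidableEq α] (F : Finset (List α)) {ℓ : ℕ}
    (R : Fin ℓ → List α) (m : Fin ℓ → ℕ) (p : ℕ) (X Y : List α) : ℕ :=
  if X.tail = Y.dropLast ∧ Allowed F (star X Y) ∧ (star X Y).length = p then
    mult F R m (star X Y)
  else 0

lemma occ_eq_card_take {α : Type*} [DecidableEq α] {w r : List α} {p : ℕ}
    (hp : 1 ≤ p) (hr : r.length = p) (hn : p ≤ w.length) :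
    occ w r = ((Finset.range (w.length - p + 1)).filter
      fun i => (w.drop i).take p = r).card := by
  unfold occ
  refine congrArg Finset.card ?_
  ext i
  simp only [Finset.mem_filter, Finset.mem_range]
  constructor
  · rintro ⟨hi, hpre⟩
    have hl := hpre.length_le
    rw [hr, List.length_drop] at hl
    have hip : i + p ≤ w.length := by omega
    have := List.prefix_iff_eq_take.mp hpre
    rw [hr] at this
    exact ⟨by omega, this.symm⟩
  · rintro ⟨hi, htake⟩
    exact ⟨by omega, htake ▸ List.take_prefix p (w.drop i)⟩

lemma occ_len_eq {α : Type*} [DecidableEq α] {u r : List α} {p : ℕ}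
    (hp : 1 ≤ p) (hu : u.length = p) (hr : r.length = p) :
    occ u r = if u = r then 1 else 0 := by
  rw [occ_eq_card_take hp hr (le_of_eq hu.symm), hu, Nat.sub_self, Finset.range_one,
    Finset.filter_singleton]
  have h0 : (u.drop 0).take p = u := by rw [List.drop_zero, ← hu, List.take_length]
  rw [h0]
  split <;> simp

theorem mult_eq_prod_Aent' {α : Type*} [DecidableEq α]
    (F : Finset (List α)) {ℓ : ℕ} (R : Fin ℓ → List α) (m : Fin ℓ → ℕ) (p : ℕ)
    (hp : 2 ≤ p)
    (hRlen : ∀ j, (R j).length = p)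
    (w : List α) (hw : Allowed F w) (hn : p ≤ w.length) :
    mult F R m w =
      ∏ i ∈ Finset.range (w.length - p + 1),
        Aent F R m p ((w.drop i).take (p - 1)) ((w.drop (i + 1)).take (p - 1)) := by
  have key : ∀ i ∈ Finset.range (w.length - p + 1),
      Aent F R m p ((w.drop i).take (p - 1)) ((w.drop (i + 1)).take (p - 1)) =
        ∏ j, m j ^ (if (w.drop i).take p = R j then 1 else 0) := by
    intro i hi
    rw [Finset.mem_range] at hi
    have hip : i + p ≤ w.length := by omega
    have hY : ((w.drop (i + 1)).take (p - 1)).length = p - 1 := by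
      rw [List.length_take, List.length_drop]; omega
    have hstar : _root_.star ((w.drop i).take (p - 1)) ((w.drop (i + 1)).take (p - 1)) =
        (w.drop i).take p := by
      unfold _root_.star
      rw [hY, List.drop_take, List.drop_drop]
      have h1 : p = (p - 1) + 1 := by omega
      conv_rhs => rw [h1, List.take_add, List.drop_drop]
      have h2 : i + 1 + (p - 1 - 1) = i + (p - 1) := by omega
      have h3 : p - 1 - (p - 1 - 1) = 1 := by omega
      rw [h2, h3]
    have htail : ((w.drop i).take (p - 1)).tail =
        ((w.drop (i + 1)).take (p - 1)).dropLast := by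
      rw [List.dropLast_eq_take, hY, ← List.drop_one, List.drop_take, List.drop_drop,
        List.take_take]
      congr 1
      omega
    have hulen : ((w.drop i).take p).length = p := by
      rw [List.length_take, List.length_drop]; omega
    have hall : Allowed F ((w.drop i).take p) := by
      intro a ha hinf
      exact hw a ha (hinf.trans ((List.take_prefix p (w.drop i)).isInfix.trans
        (List.drop_suffix i w).isInfix))
    unfold Aent
    rw [hstar, if_pos ⟨htail, hall, hulen⟩]
    unfold mult
    rw [if_pos hall]
    refine Finset.prod_congr rfl fun j _ => ?_
    rw [occ_len_eq (by omega) hulen (hRlen j)]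
  rw [Finset.prod_congr rfl key, Finset.prod_comm]
  unfold mult
  rw [if_pos hw]
  refine Finset.prod_congr rfl fun j _ => ?_
  rw [Finset.prod_pow_eq_pow_sum, ← Finset.card_filter,
    occ_eq_card_take (by omega) (hRlen j) hn]

/-- if every word of `R` has length exactly `p`, then for every allowed word
`w` of length `n ≥ p` the multiplicity `m(w)` equals the number of edge-paths of the
multigraph of `A` through the vertices `X₁,…,X_{n-p+2}` in order, where
`Xᵢ = xᵢ…x_{i+p-2}`; i.e. `m(w) = ∏_{i=1}^{n-p+1} A_{Xᵢ X_{i+1}}`. -/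
theorem mult_eq_prod_Aent {α : Type*} [DecidableEq α]
    (F : Finset (List α)) {ℓ : ℕ} (R : Fin ℓ → List α) (m : Fin ℓ → ℕ) (p : ℕ)
    (hp : 2 ≤ p)
    (hm : ∀ j, 2 ≤ m j)
    (hFred : ∀ a ∈ F, ∀ b ∈ F, a ≠ b → ¬ a <:+: b)
    (hRallowed : ∀ j, Allowed F (R j)) (hRne : ∀ j, R j ≠ [])
    (hRred : ∀ j k, j ≠ k → ¬ R j <:+: R k)
    (hFlen : ∀ a ∈ F, a.length ≤ p) (hRlen : ∀ j, (R j).length = p)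
    (w : List α) (hw : Allowed F w) (hn : p ≤ w.length) :
    mult F R m w =
      ∏ i ∈ Finset.range (w.length - p + 1),
        Aent F R m p ((w.drop i).take (p - 1)) ((w.drop (i + 1)).take (p - 1)) := by
  exact mult_eq_prod_Aent' F R m p hp hRlen w hw hn
end

section
/- Conversely, suppose Σ_F is irreducible, p is the length of the longest word in F ∪ R, and for every allowed word w = x_1…x_n (n ≥ p) the multiplicity m(w) equals ∏_{i=1}^{n-p+1} m(X_i * X_{i+1}) where X_i = x_i…x_{i+p-2}. Then every allowed word of length p-1 has multiplicity 1; i.e., all words of R have length exactly p. -/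
lemma Allowed.of_infix {α : Type*} {F : Finset (List α)} {u w : List α}
    (h : Allowed F w) (hi : u <:+: w) : Allowed F u :=
  fun a ha hau => h a ha (hau.trans hi)

lemma prefix_concat_iff {α : Type*} {r u : List α} (b : α) :
    r <+: u ++ [b] ∧ r.length ≤ u.length ↔ r <+: u := by
  constructor
  · rintro ⟨h1, h2⟩
    exact List.prefix_of_prefix_length_le h1 (List.prefix_append u [b]) h2
  · intro h
    exact ⟨h.trans (List.prefix_append u [b]), h.length_le⟩

lemma occ_ie {α : Type*} [DecidableEq α] (a b : α) (X r : List α) (p : ℕ)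
    (hp : 2 ≤ p) (hX : X.length = p - 1) (hr1 : r ≠ []) (hrp : r.length ≤ p) :
    occ (a :: (X ++ [b])) r + occ X r = occ (a :: X) r + occ (X ++ [b]) r := by
  have hr0 : 1 ≤ r.length := List.length_pos_iff.mpr hr1
  set w : List α := a :: (X ++ [b]) with hwdef
  have hwlen : w.length = p + 1 := by simp [hwdef, hX]; omega
  have haXlen : (a :: X).length = p := by simp [hX]; omega
  have hXblen : (X ++ [b]).length = p := by simp [hX]; omega
  -- drop of w for small i
  have hdrop : ∀ i ≤ p, w.drop i = (a :: X).drop i ++ [b] := by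
    intro i hi
    have : w = (a :: X) ++ [b] := by simp [hwdef]
    rw [this, List.drop_append_of_le_length (by omega)]
  set S := (Finset.range (p+2)).filter (fun i => r <+: w.drop i) with hS
  set A := (Finset.range (p+2)).filter
      (fun i => r <+: w.drop i ∧ i + r.length ≤ p) with hA
  set B := (Finset.range (p+2)).filter (fun i => r <+: w.drop i ∧ 1 ≤ i) with hB
  set C := (Finset.range (p+2)).filter
      (fun i => r <+: w.drop i ∧ i + r.length ≤ p ∧ 1 ≤ i) with hC
  have hSocc : occ w r = S.card := by
    rw [occ, hwlen]
  have hAocc : occ (a :: X) r = A.card := by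
    rw [occ, haXlen]
    congr 1
    ext i
    simp only [hA, Finset.mem_filter, Finset.mem_range]
    constructor
    · rintro ⟨hi, hq⟩
      have hl : r.length ≤ p - i := by
        have := hq.length_le
        rwa [List.length_drop, haXlen] at this
      have hip : i ≤ p := by omega
      refine ⟨by omega, ?_, by omega⟩
      rw [hdrop i hip]
      exact hq.trans (List.prefix_append _ _)
    · rintro ⟨hi, hpre, hle⟩
      have hip : i ≤ p := by omega
      rw [hdrop i hip] at hpre
      refine ⟨by omega, (prefix_concat_iff b).mp ⟨hpre, ?_⟩⟩
      rw [List.length_drop, haXlen]; omega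
  have hshift : ∀ j, w.drop (j + 1) = (X ++ [b]).drop j := by
    intro j; simp [hwdef]
  have hBocc : occ (X ++ [b]) r = B.card := by
    rw [occ, hXblen]
    have : B = ((Finset.range (p+1)).filter
        (fun i => r <+: (X ++ [b]).drop i)).image (· + 1) := by
      ext i
      simp only [hB, Finset.mem_filter, Finset.mem_range, Finset.mem_image]
      constructor
      · rintro ⟨hi, hpre, h1⟩
        refine ⟨i - 1, ⟨by omega, ?_⟩, by omega⟩
        rw [← hshift (i-1), show i - 1 + 1 = i by omega]
        exact hpre
      · rintro ⟨j, ⟨hj, hpre⟩, rfl⟩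
        exact ⟨by omega, by rw [hshift]; exact hpre, by omega⟩
    rw [this, Finset.card_image_of_injective _ (add_left_injective 1)]
  have hCocc : occ X r = C.card := by
    rw [occ, hX, show p - 1 + 1 = p by omega]
    have : C = ((Finset.range p).filter (fun j => r <+: X.drop j)).image (· + 1) := by
      ext i
      simp only [hC, Finset.mem_filter, Finset.mem_range, Finset.mem_image]
      constructor
      · rintro ⟨hi, hpre, hle, h1⟩
        refine ⟨i - 1, ⟨by omega, ?_⟩, by omega⟩
        have h2 : r <+: (X ++ [b]).drop (i-1) := by
          rw [← hshift, show i - 1 + 1 = i by omega]; exact hpre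
        rw [List.drop_append_of_le_length (by omega)] at h2
        exact (prefix_concat_iff b).mp ⟨h2, by rw [List.length_drop, hX]; omega⟩
      · rintro ⟨j, ⟨hj, hpre⟩, rfl⟩
        have hl : r.length ≤ p - 1 - j := by
          have := hpre.length_le; rwa [List.length_drop, hX] at this
        refine ⟨by omega, ?_, by omega, by omega⟩
        rw [hshift j, List.drop_append_of_le_length (by omega)]
        exact hpre.trans (List.prefix_append _ _)
    rw [this, Finset.card_image_of_injective _ (add_left_injective 1)]
  have hSAB : S = A ∪ B := by
    ext i
    simp only [hS, hA, hB, Finset.mem_filter, Finset.mem_range, Finset.mem_union]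
    constructor
    · rintro ⟨hi, hpre⟩
      have hl : r.length ≤ p + 1 - i := by
        have := hpre.length_le; rwa [List.length_drop, hwlen] at this
      rcases Nat.eq_zero_or_pos i with h0 | h1
      · exact Or.inl ⟨hi, hpre, by omega⟩
      · exact Or.inr ⟨hi, hpre, h1⟩
    · rintro (⟨hi, hpre, _⟩ | ⟨hi, hpre, _⟩) <;> exact ⟨hi, hpre⟩
  have hABC : A ∩ B = C := by
    ext i
    simp only [hA, hB, hC, Finset.mem_inter, Finset.mem_filter, Finset.mem_range]
    tauto
  rw [hSocc, hCocc, hAocc, hBocc, hSAB, ← hABC]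
  exact Finset.card_union_add_card_inter A B

lemma mult_pos' {α : Type*} [DecidableEq α] (F : Finset (List α)) {ℓ : ℕ}
    (R : Fin ℓ → List α) (m : Fin ℓ → ℕ) (hm : ∀ j, 2 ≤ m j) {w : List α}
    (hw : Allowed F w) : 0 < mult F R m w := by
  rw [mult, if_pos hw]
  exact Finset.prod_pos fun j _ => pow_pos (by have := hm j; omega) _

/-- conversely, if `Σ_F` is irreducible and for every allowed word `w` of
length at least `p` the multiplicity factors as the product of the multiplicities of its
windows of length `p` (i.e. `m(w) = ∏ᵢ m(Xᵢ * X_{i+1})` with `Xᵢ = xᵢ…x_{i+p-2}`), then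
every allowed word of length `p-1` has multiplicity `1` (equivalently, all words of `R`
have length exactly `p`). -/
theorem mult_window_factorization_forces_length {α : Type*} [DecidableEq α]
    (F : Finset (List α)) {ℓ : ℕ} (R : Fin ℓ → List α) (m : Fin ℓ → ℕ) (p : ℕ)
    (hp : 2 ≤ p)
    (hm : ∀ j, 2 ≤ m j)
    (hFred : ∀ a ∈ F, ∀ b ∈ F, a ≠ b → ¬ a <:+: b)
    (hRallowed : ∀ j, Allowed F (R j)) (hRne : ∀ j, R j ≠ [])
    (hRred : ∀ j k, j ≠ k → ¬ R j <:+: R k)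
    (hFlen : ∀ a ∈ F, a.length ≤ p) (hRlen : ∀ j, (R j).length ≤ p)
    (hirr : ∀ u v : List α, Allowed F u → Allowed F v →
      ∃ t, Allowed F (u ++ t ++ v))
    (hfact : ∀ w : List α, Allowed F w → p ≤ w.length →
      mult F R m w =
        ∏ i ∈ Finset.range (w.length - p + 1), mult F R m ((w.drop i).take p)) :
    ∀ X : List α, Allowed F X → X.length = p - 1 → mult F R m X = 1 := by
  intro X hX hXlen
  have hXne : X ≠ [] := by
    intro h; rw [h] at hXlen; simp at hXlen; omega
  obtain ⟨t1, h1⟩ := hirr X X hX hX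
  obtain ⟨t2, h2⟩ := hirr (X ++ t1 ++ X) X h1 hX
  -- decompose
  have hXt1 : X ++ t1 ≠ [] := by simp [hXne]
  obtain ⟨u', a, hu⟩ := (X ++ t1).eq_nil_or_concat.resolve_left hXt1
  obtain ⟨b, v', hv⟩ := List.exists_cons_of_ne_nil (show t2 ++ X ≠ [] by simp [hXne])
  set w' : List α := a :: (X ++ [b]) with hw'def
  have hinf : w' <:+: (X ++ t1 ++ X) ++ t2 ++ X := by
    refine ⟨u', v', ?_⟩
    have : (X ++ t1 ++ X) ++ t2 ++ X = (X ++ t1) ++ (X ++ (t2 ++ X)) := by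
      simp [List.append_assoc]
    rw [this, hu, hv, hw'def]
    simp
  have hw' : Allowed F w' := h2.of_infix hinf
  have haX : Allowed F (a :: X) := by
    refine hw'.of_infix ⟨[], [b], ?_⟩
    simp [hw'def]
  have hXb : Allowed F (X ++ [b]) := by
    refine hw'.of_infix ⟨[a], [], ?_⟩
    simp [hw'def]
  have haXlen : (a :: X).length = p := by simp [hXlen]; omega
  have hXblen : (X ++ [b]).length = p := by simp [hXlen]; omega
  have hw'len : w'.length = p + 1 := by simp [hw'def, hXlen]; omega
  -- factorization for w'
  have hfw : mult F R m w' = mult F R m (a :: X) * mult F R m (X ++ [b]) := by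
    rw [hfact w' hw' (by omega), hw'len, show p + 1 - p + 1 = 2 by omega,
      Finset.prod_range_succ, Finset.prod_range_one]
    congr 2
    · rw [List.drop_zero, hw'def, show a :: (X ++ [b]) = (a :: X) ++ [b] by simp,
        List.take_left' haXlen]
    · have hd : w'.drop 1 = X ++ [b] := by simp [hw'def]
      rw [hd, List.take_of_length_le (le_of_eq hXblen)]
  -- inclusion-exclusion identity
  have hie : mult F R m w' * mult F R m X
      = mult F R m (a :: X) * mult F R m (X ++ [b]) := by
    rw [mult, mult, mult, mult, if_pos hw', if_pos hX, if_pos haX, if_pos hXb,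
      ← Finset.prod_mul_distrib, ← Finset.prod_mul_distrib]
    refine Finset.prod_congr rfl fun j _ => ?_
    rw [← pow_add, ← pow_add, occ_ie a b X (R j) p hp hXlen (hRne j) (hRlen j)]
  have hpos := mult_pos' F R m hm hw'
  have : mult F R m w' * mult F R m X = mult F R m w' * 1 := by
    rw [hie, ← hfw, mul_one]
  exact Nat.eq_of_mul_eq_mul_left hpos this
end

section
/- Let Σ be an alphabet of size q, F = {a_1,…,a_s}, R = {r_1(m_1),…,r_ℓ(m_ℓ)} reduced collections with F ∪ R reduced. Let f(n) = ∑_{w ∈ L_n} m(w) with f(0)=1, and g_{r_j}(n) the multiplicity-weighted count of allowed words of length n ending in r_j, and f_{a_i}(n) the weighted count of length-n words ending in a_i whose only forbidden occurrence is that final a_i (with f_{a_i}, g_{r_j} vanishing at 0). Then for all n ≥ 0: q·f(n) − f(n+1) + ∑_{j=1}^{ℓ} (1 − 1/m_j)·g_{r_j}(n+1) − ∑_{i=1}^{s} f_{a_i}(n+1) = 0. -/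
/-- `w` avoids every word of the (indexed) forbidden collection `F`. -/
def AllowedI {α : Type*} {s : ℕ} (F : Fin s → List α) (w : List α) : Prop :=
  ∀ i, ¬ F i <:+: w

instance {α : Type*} [DecidableEq α] {s : ℕ} (F : Fin s → List α) (w : List α) :
    Decidable (AllowedI F w) := by
  unfold AllowedI; infer_instance

/-- Multiplicity of a word: `m(w) = ∏_j m_j ^ (occurrences of r_j in w)` for allowed `w`,
`0` otherwise. -/
def multI {α : Type*} [DecidableEq α] {s ℓ : ℕ} (F : Fin s → List α)
    (R : Fin ℓ → List α) (m : Fin ℓ → ℕ) (w : List α) : ℕ :=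
  if AllowedI F w then ∏ j, m j ^ occ w (R j) else 0

/-- `f(n) = ∑_{w ∈ L_n} m(w)`, the multiplicity-weighted count of allowed words of
length `n` (with `f(0) = 1`). -/
def fCount {α : Type*} [DecidableEq α] [Fintype α] {s ℓ : ℕ} (F : Fin s → List α)
    (R : Fin ℓ → List α) (m : Fin ℓ → ℕ) (n : ℕ) : ℕ :=
  ∑ f : Fin n → α, multI F R m (List.ofFn f)

/-- `g_{r_j}(n)`: the multiplicity-weighted count of allowed words of length `n`
ending with the repeated word `r_j`. -/
def gCount {α : Type*} [DecidableEq α] [Fintype α] {s ℓ : ℕ} (F : Fin s → List α)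
    (R : Fin ℓ → List α) (m : Fin ℓ → ℕ) (j : Fin ℓ) (n : ℕ) : ℕ :=
  ∑ f : Fin n → α,
    if R j <:+ List.ofFn f then multI F R m (List.ofFn f) else 0

/-- The word `w` ends with the forbidden word `a` and this final occurrence of `a` is the
only occurrence of a word of `F` in `w`. -/
def OnlyEndForbidden {α : Type*} {s : ℕ} (F : Fin s → List α) (a w : List α) : Prop :=
  a <:+ w ∧ ∀ k : Fin s, ∀ t : ℕ, t ≤ w.length → F k <+: w.drop t →
    F k = a ∧ t = w.length - a.length

instance {α : Type*} [DecidableEq α] {s : ℕ} (F : Fin s → List α) (a w : List α) :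
    Decidable (OnlyEndForbidden F a w) := by
  unfold OnlyEndForbidden; infer_instance

/-- `f_{a_i}(n)`: the weighted count of words of length `n` ending with `a_i` whose only
forbidden occurrence is that final `a_i`; such a word is weighted by
`∏_j m_j ^ (n(w;r_j) − n(a_i;r_j))`. -/
def faCount {α : Type*} [DecidableEq α] [Fintype α] {s ℓ : ℕ} (F : Fin s → List α)
    (R : Fin ℓ → List α) (m : Fin ℓ → ℕ) (i : Fin s) (n : ℕ) : ℕ :=
  ∑ f : Fin n → α,
    if OnlyEndForbidden F (F i) (List.ofFn f) then
      ∏ j, m j ^ (occ (List.ofFn f) (R j) - occ (F i) (R j))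
    else 0

section Aux
variable {α : Type*} [DecidableEq α]

lemma infix_iff_drop (a w : List α) : a <:+: w ↔ ∃ t, t ≤ w.length ∧ a <+: w.drop t := by
  constructor
  · rintro ⟨s, u, rfl⟩
    refine ⟨s.length, by simp, ?_⟩
    rw [show s ++ a ++ u = s ++ (a ++ u) by simp, List.drop_left]
    exact List.prefix_append _ _
  · rintro ⟨t, ht, hp⟩
    exact List.infix_iff_prefix_suffix.2 ⟨w.drop t, hp, List.drop_suffix t w⟩

lemma occ_eq_zero_of_not_infix {a w : List α} (h : ¬ a <:+: w) : occ w a = 0 := by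
  unfold occ
  rw [Finset.card_eq_zero, Finset.filter_eq_empty_iff]
  intro i _ hp
  exact h (List.infix_iff_prefix_suffix.2 ⟨w.drop i, hp, List.drop_suffix i w⟩)

lemma occ_pos_of_suffix {r v : List α} (hr : r ≠ []) (h : r <:+ v) : 1 ≤ occ v r := by
  unfold occ
  rw [Nat.one_le_iff_ne_zero, ← Nat.pos_iff_ne_zero, Finset.card_pos]
  refine ⟨v.length - r.length, ?_⟩
  rw [Finset.mem_filter, Finset.mem_range]
  refine ⟨by omega, ?_⟩
  have h2 := List.suffix_iff_eq_drop.1 h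
  nth_rewrite 1 [h2]
  exact List.prefix_rfl

lemma occ_append_singleton (w : List α) (x : α) (r : List α) (hr : r ≠ []) :
    occ (w ++ [x]) r = occ w r + if r <:+ w ++ [x] then 1 else 0 := by
  have hr1 : 1 ≤ r.length := List.length_pos_iff.mpr hr
  have hlen : (w ++ [x]).length = w.length + 1 := by simp
  unfold occ
  have htop : ¬ r <+: (w ++ [x]).drop (w.length + 1) := by
    intro h
    rw [List.drop_eq_nil_of_le (by simp)] at h
    exact hr (List.prefix_nil.mp h)
  have hQtoP : ∀ i, r <+: w.drop i → r <+: (w ++ [x]).drop i := by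
    intro i h
    have hi : i ≤ w.length := by
      by_contra hc
      rw [List.drop_eq_nil_of_le (by omega)] at h
      exact hr (List.prefix_nil.mp h)
    rw [List.drop_append_of_le_length hi]
    exact h.trans (List.prefix_append _ _)
  have hPsplit : ∀ i, i ≤ w.length → r <+: (w ++ [x]).drop i →
      r <+: w.drop i ∨ (i = w.length + 1 - r.length ∧ r <:+ w ++ [x]) := by
    intro i hi h
    have hlr : r.length ≤ w.length + 1 - i := by
      have := h.length_le; rw [List.length_drop, hlen] at this; omega
    by_cases hc : i + r.length ≤ w.length
    · left
      rw [List.prefix_iff_eq_take] at h ⊢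
      rw [List.drop_append_of_le_length hi,
        List.take_append_of_le_length (by rw [List.length_drop]; omega)] at h
      exact h
    · right
      have h2 : r = (w ++ [x]).drop i := h.eq_of_length (by rw [List.length_drop, hlen]; omega)
      refine ⟨by omega, ?_⟩
      rw [h2]; exact List.drop_suffix _ _
  by_cases hs : r <:+ w ++ [x]
  · rw [if_pos hs]
    set t := w.length + 1 - r.length with htdef
    have hts : t ≤ w.length := by have := hs.length_le; rw [hlen] at this; omega
    have hPt : r <+: (w ++ [x]).drop t := by
      have h2 := List.suffix_iff_eq_drop.1 hs
      rw [hlen] at h2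
      nth_rewrite 1 [h2]
      exact List.prefix_rfl
    have hQt : ¬ r <+: w.drop t := by
      intro h
      have := h.length_le; rw [List.length_drop] at this; omega
    have hset : (Finset.range ((w ++ [x]).length + 1)).filter (fun i => r <+: (w ++ [x]).drop i)
        = insert t ((Finset.range (w.length + 1)).filter fun i => r <+: w.drop i) := by
      ext i
      simp only [Finset.mem_insert, Finset.mem_filter, Finset.mem_range, hlen]
      constructor
      · rintro ⟨hir, hP⟩
        by_cases hit : i = t
        · exact Or.inl hit
        · rcases Nat.lt_or_ge i (w.length + 1) with hi | hi
          · rcases hPsplit i (by omega) hP with h | ⟨h1, _⟩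
            · exact Or.inr ⟨by omega, h⟩
            · exact absurd h1 hit
          · exact absurd ((show i = w.length + 1 by omega) ▸ hP) htop
      · rintro (rfl | ⟨hi, hQ⟩)
        · exact ⟨by omega, hPt⟩
        · exact ⟨by omega, hQtoP i hQ⟩
    rw [hset, Finset.card_insert_of_notMem (by
      simp only [Finset.mem_filter, Finset.mem_range]
      tauto)]
  · rw [if_neg hs, add_zero]
    congr 1
    ext i
    simp only [Finset.mem_filter, Finset.mem_range, hlen]
    constructor
    · rintro ⟨hir, hP⟩
      rcases Nat.lt_or_ge i (w.length + 1) with hi | hi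
      · rcases hPsplit i (by omega) hP with h | ⟨_, h2⟩
        · exact ⟨hi, h⟩
        · exact absurd h2 hs
      · exact absurd ((show i = w.length + 1 by omega) ▸ hP) htop
    · rintro ⟨hi, hQ⟩
      exact ⟨by omega, hQtoP i hQ⟩

lemma sum_ofFn_succ {M : Type*} [AddCommMonoid M] [Fintype α] (φ : List α → M) (n : ℕ) :
    ∑ g : Fin (n + 1) → α, φ (List.ofFn g)
      = ∑ w : Fin n → α, ∑ x : α, φ (List.ofFn w ++ [x]) := by
  rw [Fintype.sum_equiv (Fin.insertNthEquiv (fun _ : Fin (n+1) => α) (Fin.last n)).symm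
    (fun g => φ (List.ofFn g)) (fun p => φ (List.ofFn p.2 ++ [p.1])) ?_,
    Fintype.sum_prod_type, Finset.sum_comm]
  intro g
  simp only [Fin.insertNthEquiv_symm_apply]
  congr 1
  rw [List.ofFn_succ' g, List.concat_eq_append]
  have : (Fin.last n).removeNth g = fun i => g i.castSucc := by
    funext j
    simp [Fin.removeNth, Fin.succAbove_last]
  rw [this]

end Aux

section Terms
variable {α : Type*} [DecidableEq α] {s ℓ : ℕ}

/-- the term of `h` (g divided by m_j) -/
def hTerm (F : Fin s → List α) (R : Fin ℓ → List α) (m : Fin ℓ → ℕ) (j : Fin ℓ)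
    (v : List α) : ℕ :=
  if AllowedI F v ∧ R j <:+ v then ∏ k, m k ^ (occ v (R k) - if k = j then 1 else 0) else 0

def faTerm (F : Fin s → List α) (R : Fin ℓ → List α) (m : Fin ℓ → ℕ) (i : Fin s)
    (v : List α) : ℕ :=
  if OnlyEndForbidden F (F i) v then ∏ k, m k ^ (occ v (R k) - occ (F i) (R k)) else 0

lemma gTerm_eq (F : Fin s → List α) (R : Fin ℓ → List α) (m : Fin ℓ → ℕ) (j : Fin ℓ)
    (hRne : R j ≠ []) (v : List α) :
    (if R j <:+ v then multI F R m v else 0) = m j * hTerm F R m j v := by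
  by_cases hs : R j <:+ v
  · by_cases hA : AllowedI F v
    · rw [if_pos hs]
      unfold multI hTerm
      rw [if_pos hA, if_pos ⟨hA, hs⟩]
      have h1 : 1 ≤ occ v (R j) := occ_pos_of_suffix hRne hs
      rw [← Finset.mul_prod_erase Finset.univ (fun k => m k ^ occ v (R k)) (Finset.mem_univ j),
        ← Finset.mul_prod_erase Finset.univ
          (fun k => m k ^ (occ v (R k) - if k = j then 1 else 0)) (Finset.mem_univ j),
        ← mul_assoc]
      congr 1
      · have h2 : (if j = j then 1 else 0) = 1 := if_pos rfl
        rw [h2, ← pow_succ']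
        congr 1
        omega
      · apply Finset.prod_congr rfl
        intro k hk
        rw [if_neg (Finset.ne_of_mem_erase hk), Nat.sub_zero]
    · rw [if_pos hs]
      unfold multI hTerm
      rw [if_neg hA, if_neg (fun h => hA h.1), mul_zero]
  · rw [if_neg hs]
    unfold hTerm
    rw [if_neg (fun h => hs h.2), mul_zero]

lemma perword (F : Fin s → List α) (R : Fin ℓ → List α) (m : Fin ℓ → ℕ)
    (hFlen : ∀ i, 2 ≤ (F i).length) (hFinj : Function.Injective F)
    (hRne : ∀ j, R j ≠ [])
    (hFF : ∀ i k, F i ≠ F k → ¬ F i <:+: F k)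
    (hRR : ∀ j k, j ≠ k → ¬ R j <:+: R k)
    (hFR : ∀ i j, ¬ F i <:+: R j)
    (hRF : ∀ i j, ¬ R j <:+: F i)
    (W : List α) (x : α) :
    multI F R m W + ∑ j, (if R j <:+ W ++ [x] then multI F R m (W ++ [x]) else 0)
      = multI F R m (W ++ [x]) + ∑ j, hTerm F R m j (W ++ [x])
        + ∑ i, faTerm F R m i (W ++ [x]) := by
  set v := W ++ [x] with hv
  have hlen : v.length = W.length + 1 := by simp [hv]
  have hFne : ∀ i, F i ≠ [] := by
    intro i h
    have := hFlen i
    rw [h] at this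
    simp at this
  have hdrop : ∀ t, t ≤ W.length → v.drop t = W.drop t ++ [x] := fun t ht =>
    List.drop_append_of_le_length ht
  -- ending classification
  have hend : ∀ (a : List α), a ≠ [] → ∀ t, t ≤ v.length → a <+: v.drop t →
      (t ≤ W.length ∧ a <+: W.drop t) ∨ (a <:+ v ∧ t = v.length - a.length) := by
    intro a ha t ht hp
    have ha1 : 1 ≤ a.length := List.length_pos_iff.mpr ha
    have hla : a.length ≤ v.length - t := by
      have := hp.length_le; rw [List.length_drop] at this; omega
    by_cases hc : t + a.length ≤ W.length
    · left
      have htW : t ≤ W.length := by omega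
      refine ⟨htW, ?_⟩
      rw [List.prefix_iff_eq_take] at hp ⊢
      rw [hdrop t htW, List.take_append_of_le_length (by rw [List.length_drop]; omega)] at hp
      exact hp
    · right
      have h2 : a = v.drop t := hp.eq_of_length (by rw [List.length_drop]; omega)
      refine ⟨?_, by omega⟩
      rw [h2]; exact List.drop_suffix _ _
  have hlift : ∀ (a : List α) t, t ≤ W.length → a <+: W.drop t → a <+: v.drop t := by
    intro a t ht hp
    rw [hdrop t ht]
    exact hp.trans (List.prefix_append _ _)
  have hWallow : AllowedI F v → AllowedI F W := by
    intro hA k hk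
    exact hA k (hk.trans ⟨[], [x], by simp [hv]⟩)
  have suffix_unique_R : ∀ j k, R j <:+ v → R k <:+ v → j = k := by
    intro j k hj hk
    by_contra hne
    rcases List.suffix_or_suffix_of_suffix hj hk with h | h
    · exact hRR j k hne h.isInfix
    · exact hRR k j (Ne.symm hne) h.isInfix
  have suffix_F_eq : ∀ i k, F i <:+ v → F k <:+ v → F i = F k := by
    intro i k hi hk
    by_contra hne
    rcases List.suffix_or_suffix_of_suffix hi hk with h | h
    · exact hFF i k hne h.isInfix
    · exact hFF k i (fun hh => hne hh.symm) h.isInfix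
  have not_RF : ∀ j i, R j <:+ v → ¬ F i <:+ v := by
    intro j i hj hi
    rcases List.suffix_or_suffix_of_suffix hj hi with h | h
    · exact hRF i j h.isInfix
    · exact hFR i j h.isInfix
  have classify : ¬ AllowedI F v → AllowedI F W → ∃ i, OnlyEndForbidden F (F i) v := by
    intro hnA hWA
    unfold AllowedI at hnA
    push_neg at hnA
    obtain ⟨i, hi⟩ := hnA
    obtain ⟨t, ht, hp⟩ := (infix_iff_drop _ _).1 hi
    rcases hend (F i) (hFne i) t ht hp with ⟨htW, h⟩ | ⟨hsuf, hteq⟩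
    · exact absurd ((infix_iff_drop _ _).2 ⟨t, htW, h⟩) (hWA i)
    · refine ⟨i, hsuf, ?_⟩
      intro k t' ht' hp'
      rcases hend (F k) (hFne k) t' ht' hp' with ⟨htW', h'⟩ | ⟨hsuf', hteq'⟩
      · exact absurd ((infix_iff_drop _ _).2 ⟨t', htW', h'⟩) (hWA k)
      · have heq := suffix_F_eq k i hsuf' hsuf
        exact ⟨heq, by rw [hteq', heq]⟩
  have onlyend_notallowed : ∀ i, OnlyEndForbidden F (F i) v → ¬ AllowedI F v := by
    intro i ⟨hsuf, _⟩ hA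
    exact hA i hsuf.isInfix
  have onlyend_Wallowed : ∀ i, OnlyEndForbidden F (F i) v → AllowedI F W := by
    intro i ⟨hsuf, hcond⟩ k hk
    obtain ⟨t, htW, hpk⟩ := (infix_iff_drop _ _).1 hk
    have hpv : F k <+: v.drop t := hlift (F k) t htW hpk
    obtain ⟨heq, hteq⟩ := hcond k t (by omega) hpv
    have hl1 := hpk.length_le
    rw [List.length_drop] at hl1
    have hl2 : (F i).length ≤ v.length := hsuf.length_le
    have hl3 : (F k).length = (F i).length := by rw [heq]
    have := hFlen i
    omega
  have onlyend_unique : ∀ i k, OnlyEndForbidden F (F i) v → OnlyEndForbidden F (F k) v →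
      i = k := by
    intro i k ⟨hsi, _⟩ ⟨_, hck⟩
    have h2 := List.suffix_iff_eq_drop.1 hsi
    have hl : (F i).length ≤ v.length := hsi.length_le
    obtain ⟨heq, _⟩ := hck i (v.length - (F i).length) (by omega)
      (by nth_rewrite 1 [h2]; exact List.prefix_rfl)
    exact hFinj heq
  by_cases hA : AllowedI F v
  · have hWA := hWallow hA
    have hE0 : ∑ i, faTerm F R m i v = 0 := by
      apply Finset.sum_eq_zero
      intro i _
      unfold faTerm
      exact if_neg (fun h => onlyend_notallowed i h hA)
    rw [hE0, add_zero]
    by_cases hsuf : ∃ j, R j <:+ v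
    · obtain ⟨j₀, hj₀⟩ := hsuf
      have hocc : ∀ k, occ v (R k) = occ W (R k) + if k = j₀ then 1 else 0 := by
        intro k
        rw [hv, occ_append_singleton W x (R k) (hRne k), ← hv]
        congr 1
        by_cases hk : k = j₀
        · subst hk; rw [if_pos hj₀, if_pos rfl]
        · rw [if_neg hk, if_neg (fun h => hk (suffix_unique_R k j₀ h hj₀))]
      have hB : ∑ j, (if R j <:+ v then multI F R m v else 0) = multI F R m v := by
        rw [Finset.sum_eq_single j₀]
        · rw [if_pos hj₀]
        · intro b _ hb
          exact if_neg (fun h => hb (suffix_unique_R b j₀ h hj₀))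
        · intro h
          exact absurd (Finset.mem_univ j₀) h
      have hD : ∑ j, hTerm F R m j v = multI F R m W := by
        rw [Finset.sum_eq_single j₀]
        · unfold hTerm multI
          rw [if_pos ⟨hA, hj₀⟩, if_pos hWA]
          apply Finset.prod_congr rfl
          intro k _
          congr 1
          rw [hocc k]
          by_cases hk : k = j₀ <;> simp [hk]
        · intro b _ hb
          exact if_neg (fun h => hb (suffix_unique_R b j₀ h.2 hj₀))
        · intro h
          exact absurd (Finset.mem_univ j₀) h
      rw [hB, hD]
      omega
    · push_neg at hsuf
      have hocc : ∀ k, occ v (R k) = occ W (R k) := by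
        intro k
        rw [hv, occ_append_singleton W x (R k) (hRne k), ← hv, if_neg (hsuf k), add_zero]
      have hB : ∑ j, (if R j <:+ v then multI F R m v else 0) = 0 :=
        Finset.sum_eq_zero fun j _ => if_neg (hsuf j)
      have hD : ∑ j, hTerm F R m j v = 0 :=
        Finset.sum_eq_zero fun j _ => if_neg (fun h => hsuf j h.2)
      have hCA : multI F R m v = multI F R m W := by
        unfold multI
        rw [if_pos hA, if_pos hWA]
        exact Finset.prod_congr rfl fun k _ => by rw [hocc k]
      rw [hB, hD, hCA]
  · have hC : multI F R m v = 0 := if_neg hA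
    have hB : ∑ j, (if R j <:+ v then multI F R m v else 0) = 0 :=
      Finset.sum_eq_zero fun j _ => by rw [hC]; simp
    have hD : ∑ j, hTerm F R m j v = 0 :=
      Finset.sum_eq_zero fun j _ => if_neg (fun h => hA h.1)
    rw [hB, hC, hD]
    by_cases hWA : AllowedI F W
    · obtain ⟨i₀, hOE⟩ := classify hA hWA
      have hnoR : ∀ j, ¬ R j <:+ v := fun j h => not_RF j i₀ h hOE.1
      have hocc : ∀ k, occ v (R k) = occ W (R k) := by
        intro k
        rw [hv, occ_append_singleton W x (R k) (hRne k), ← hv, if_neg (hnoR k), add_zero]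
      have hE : ∑ i, faTerm F R m i v = multI F R m W := by
        rw [Finset.sum_eq_single i₀]
        · unfold faTerm multI
          rw [if_pos hOE, if_pos hWA]
          apply Finset.prod_congr rfl
          intro k _
          congr 1
          rw [hocc k, occ_eq_zero_of_not_infix (hRF i₀ k), Nat.sub_zero]
        · intro b _ hb
          unfold faTerm
          exact if_neg (fun h => hb (onlyend_unique b i₀ h hOE))
        · intro h
          exact absurd (Finset.mem_univ i₀) h
      rw [hE]
      omega
    · have hAW : multI F R m W = 0 := if_neg hWA
      have hE : ∑ i, faTerm F R m i v = 0 :=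
        Finset.sum_eq_zero fun i _ => by
          unfold faTerm
          exact if_neg (fun h => hWA (onlyend_Wallowed i h))
      rw [hE, hAW]

end Terms

def hCount {α : Type*} [DecidableEq α] [Fintype α] {s ℓ : ℕ} (F : Fin s → List α)
    (R : Fin ℓ → List α) (m : Fin ℓ → ℕ) (j : Fin ℓ) (n : ℕ) : ℕ :=
  ∑ f : Fin n → α, hTerm F R m j (List.ofFn f)

lemma gCount_eq {α : Type*} [DecidableEq α] [Fintype α] {s ℓ : ℕ} (F : Fin s → List α)
    (R : Fin ℓ → List α) (m : Fin ℓ → ℕ) (j : Fin ℓ) (hRne : ∀ j, R j ≠ []) (n : ℕ) :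
    gCount F R m j n = m j * hCount F R m j n := by
  unfold gCount hCount
  rw [Finset.mul_sum]
  exact Finset.sum_congr rfl fun f _ => gTerm_eq F R m j (hRne j) _

lemma nat_identity {α : Type*} [DecidableEq α] [Fintype α] {s ℓ : ℕ} (F : Fin s → List α)
    (R : Fin ℓ → List α) (m : Fin ℓ → ℕ)
    (hFlen : ∀ i, 2 ≤ (F i).length) (hFinj : Function.Injective F)
    (hRne : ∀ j, R j ≠ [])
    (hFF : ∀ i k, F i ≠ F k → ¬ F i <:+: F k)
    (hRR : ∀ j k, j ≠ k → ¬ R j <:+: R k)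
    (hFR : ∀ i j, ¬ F i <:+: R j)
    (hRF : ∀ i j, ¬ R j <:+: F i)
    (n : ℕ) :
    Fintype.card α * fCount F R m n + ∑ j, gCount F R m j (n + 1)
      = fCount F R m (n + 1) + ∑ j, hCount F R m j (n + 1)
        + ∑ i, faCount F R m i (n + 1) := by
  have h0 : Fintype.card α * fCount F R m n
      = ∑ w : Fin n → α, ∑ _x : α, multI F R m (List.ofFn w) := by
    unfold fCount
    rw [Finset.mul_sum]
    apply Finset.sum_congr rfl
    intro w _
    rw [Finset.sum_const, Finset.card_univ, smul_eq_mul]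
  have h1 : fCount F R m (n + 1)
      = ∑ w : Fin n → α, ∑ x : α, multI F R m (List.ofFn w ++ [x]) :=
    sum_ofFn_succ _ n
  have hg : ∑ j, gCount F R m j (n + 1)
      = ∑ w : Fin n → α, ∑ x : α, ∑ j,
          (if R j <:+ List.ofFn w ++ [x] then multI F R m (List.ofFn w ++ [x]) else 0) := by
    unfold gCount
    rw [Finset.sum_congr rfl (fun j _ =>
      sum_ofFn_succ (fun v => if R j <:+ v then multI F R m v else 0) n), Finset.sum_comm]
    exact Finset.sum_congr rfl fun w _ => Finset.sum_comm
  have hh : ∑ j, hCount F R m j (n + 1)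
      = ∑ w : Fin n → α, ∑ x : α, ∑ j, hTerm F R m j (List.ofFn w ++ [x]) := by
    unfold hCount
    rw [Finset.sum_congr rfl (fun j _ =>
      sum_ofFn_succ (fun v => hTerm F R m j v) n), Finset.sum_comm]
    exact Finset.sum_congr rfl fun w _ => Finset.sum_comm
  have hfa : ∑ i, faCount F R m i (n + 1)
      = ∑ w : Fin n → α, ∑ x : α, ∑ i, faTerm F R m i (List.ofFn w ++ [x]) := by
    unfold faCount
    show (∑ i, ∑ f : Fin (n + 1) → α, faTerm F R m i (List.ofFn f)) = _
    rw [Finset.sum_congr rfl (fun i _ =>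
      sum_ofFn_succ (fun v => faTerm F R m i v) n), Finset.sum_comm]
    exact Finset.sum_congr rfl fun w _ => Finset.sum_comm
  rw [h0, h1, hg, hh, hfa, ← Finset.sum_add_distrib, ← Finset.sum_add_distrib,
    ← Finset.sum_add_distrib]
  apply Finset.sum_congr rfl
  intro w _
  rw [← Finset.sum_add_distrib, ← Finset.sum_add_distrib, ← Finset.sum_add_distrib]
  apply Finset.sum_congr rfl
  intro x _
  have := perword F R m hFlen hFinj hRne hFF hRR hFR hRF (List.ofFn w) x
  omega

/-- if `F ∪ R` is reduced, then for all `n ≥ 0`,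
`q·f(n) − f(n+1) + ∑_j (1 − 1/m_j)·g_{r_j}(n+1) − ∑_i f_{a_i}(n+1) = 0`. -/
theorem first_recurrence {α : Type*} [DecidableEq α] [Fintype α] {s ℓ : ℕ}
    (F : Fin s → List α) (R : Fin ℓ → List α) (m : Fin ℓ → ℕ) (q : ℕ)
    (hq : q = Fintype.card α)
    (hm : ∀ j, 2 ≤ m j)
    (hFlen : ∀ i, 2 ≤ (F i).length) (hFinj : Function.Injective F)
    (hRne : ∀ j, R j ≠ [])
    (hFF : ∀ i k, F i ≠ F k → ¬ F i <:+: F k)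
    (hRR : ∀ j k, j ≠ k → ¬ R j <:+: R k)
    (hFR : ∀ i j, ¬ F i <:+: R j)
    (hRF : ∀ i j, ¬ R j <:+: F i)
    (n : ℕ) :
    (q : ℝ) * fCount F R m n - fCount F R m (n + 1) +
        ∑ j, (1 - 1 / (m j : ℝ)) * gCount F R m j (n + 1) -
        ∑ i, (faCount F R m i (n + 1) : ℝ) = 0 := by
  have hnat := nat_identity F R m hFlen hFinj hRne hFF hRR hFR hRF n
  have hcast := congrArg (Nat.cast : ℕ → ℝ) hnat
  push_cast at hcast
  rw [← hq] at hcast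
  have hsum : ∑ j, (1 - 1 / (m j : ℝ)) * gCount F R m j (n + 1)
      = ∑ j, (gCount F R m j (n + 1) : ℝ) - ∑ j, (hCount F R m j (n + 1) : ℝ) := by
    rw [← Finset.sum_sub_distrib]
    apply Finset.sum_congr rfl
    intro j _
    have hmj : (m j : ℝ) ≠ 0 := by
      have := hm j
      positivity
    rw [gCount_eq F R m j hRne (n + 1)]
    push_cast
    field_simp
  rw [hsum]
  linarith
end

section
/- With the same setup (F ∪ R reduced), for each repeated word r_k ∈ R and all n ≥ 0: f(n) = g_{r_k}(n + |r_k|) + ∑_{i=1}^{s} ∑_{0 < t ∈ (a_i, r_k)} f_{a_i}(n+t) − ∑_{j=1}^{ℓ} ∑_{0 < s ∈ (r_j, r_k)} (1 − 1/m_j)·g_{r_j}(n+s), where t ∈ (u,v) means the correlation bit of u and v at distance t from the right end of u equals 1. -/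
/-- The `i`-th correlation bit (0-indexed; the paper's `c_{i+1}`) of `u` and `v`. -/
def corrBit {α : Type*} (u v : List α) (i : ℕ) : Prop :=
  ∀ j : ℕ, j < min (u.length - i) v.length → u[i + j]? = v[j]?

instance {α : Type*} [DecidableEq α] (u v : List α) (i : ℕ) :
    Decidable (corrBit u v i) := by
  unfold corrBit; infer_instance

/-- The set of `t > 0` with `t ∈ (u,v)`, i.e. the correlation bit of `u` and `v` at
distance `t` from the right end of `u` equals `1`. -/
def corrSet {α : Type*} [DecidableEq α] (u v : List α) : Finset ℕ :=
  (Finset.Icc 1 u.length).filter fun t => corrBit u v (u.length - t)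

section Aux
set_option linter.unusedSectionVars false
set_option linter.unusedVariables false
open List Finset

variable {α : Type*} [DecidableEq α]

lemma prefix_of_agree {l₁ l₂ : List α} (hlen : l₁.length ≤ l₂.length)
    (h : ∀ j, j < l₁.length → l₁[j]? = l₂[j]?) : l₁ <+: l₂ := by
  have : l₁ = l₂.take l₁.length := by
    apply List.ext_getElem?
    intro j
    by_cases hj : j < l₁.length
    · rw [h j hj, List.getElem?_take]
      simp [hj]
    · push_neg at hj
      rw [List.getElem?_eq_none hj, eq_comm, List.getElem?_eq_none]
      simpa using Or.inl hj
  rw [this]; exact take_prefix _ _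

lemma corrBit_cases {u v : List α} {i : ℕ} (h : corrBit u v i) :
    v <+: u.drop i ∨ u.drop i <+: v := by
  rcases le_or_gt v.length (u.length - i) with hle | hlt
  · left
    apply prefix_of_agree (by simpa using hle)
    intro j hj
    rw [List.getElem?_drop, ← h j (by omega)]
  · right
    apply prefix_of_agree (by simpa using hlt.le)
    intro j hj
    rw [List.length_drop] at hj
    rw [List.getElem?_drop, h j (by omega)]

lemma infix_of_prefix_drop {r w : List α} {i : ℕ} (h : r <+: w.drop i) : r <:+: w :=
  h.isInfix.trans (drop_suffix i w).isInfix

lemma occ_eq_zero {w r : List α} (h : ¬ r <:+: w) : occ w r = 0 := by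
  unfold occ
  rw [Finset.card_eq_zero, Finset.filter_eq_empty_iff]
  intro i _ hp
  exact h (infix_of_prefix_drop hp)

lemma suffix_append_singleton {l w : List α} (c : α) (h : l <:+ w) :
    l ++ [c] <:+ w ++ [c] := by
  obtain ⟨t, ht⟩ := h
  exact ⟨t, by rw [← List.append_assoc, ht]⟩

lemma occ_snoc (w : List α) (r : List α) (c : α) (hr : r ≠ []) :
    occ (w ++ [c]) r = occ w r + if r <:+ w ++ [c] then 1 else 0 := by
  classical
  have hlen : (w ++ [c]).length = w.length + 1 := by simp
  have h1 : occ (w ++ [c]) r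
      = ∑ i ∈ Finset.range (w.length + 2), (if r <+: (w ++ [c]).drop i then 1 else 0) := by
    unfold occ
    rw [hlen, Finset.card_filter]
  have h2 : occ w r
      = ∑ i ∈ Finset.range (w.length + 2), (if r <+: w.drop i then 1 else 0) := by
    unfold occ
    rw [Finset.card_filter, Finset.sum_range_succ (n := w.length + 1)]
    have : w.drop (w.length + 1) = [] := List.drop_eq_nil_of_le (by omega)
    rw [this, if_neg (by simpa [List.prefix_nil] using hr)]
    ring
  have h3 : (if r <:+ w ++ [c] then (1:ℕ) else 0)
      = ∑ i ∈ Finset.range (w.length + 2),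
          (if r <:+ w ++ [c] ∧ i = w.length + 1 - r.length then 1 else 0) := by
    by_cases hs : r <:+ w ++ [c]
    · rw [if_pos hs]
      have hcg : ∀ i ∈ Finset.range (w.length + 2),
          (if r <:+ w ++ [c] ∧ i = w.length + 1 - r.length then (1:ℕ) else 0)
          = (if i = w.length + 1 - r.length then (1:ℕ) else 0) := fun i _ => by simp [hs]
      rw [Finset.sum_congr rfl hcg,
        Finset.sum_ite_eq' (Finset.range (w.length + 2)) _ (fun _ => (1:ℕ)),
        if_pos (Finset.mem_range.mpr (by omega))]
    · simp [hs]
  rw [h1, h2, h3, ← Finset.sum_add_distrib]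
  apply Finset.sum_congr rfl
  intro i hi
  rw [Finset.mem_range] at hi
  by_cases hiw : i ≤ w.length
  · rw [List.drop_append_of_le_length hiw]
    simp only [List.prefix_concat_iff]
    have hdl : (w.drop i).length = w.length - i := List.length_drop
    by_cases hc1 : r = w.drop i ++ [c]
    · have hns : ¬ r <+: w.drop i := by
        intro hp
        have := hp.length_le
        rw [hc1] at this; simp [hdl] at this
      have hrs : r <:+ w ++ [c] := by
        rw [hc1]; exact suffix_append_singleton c (drop_suffix i w)
      have hrl : r.length = w.length - i + 1 := by rw [hc1]; simp [hdl]
      rw [if_pos (Or.inl hc1), if_neg hns,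
        if_pos ⟨hrs, by omega⟩]
    · by_cases hc2 : r <+: w.drop i
      · have hrl := hc2.length_le
        rw [hdl] at hrl
        rw [if_pos (Or.inr hc2), if_pos hc2, if_neg]
        rintro ⟨hs, hieq⟩
        have := hs.length_le
        simp at this
        omega
      · rw [if_neg (by tauto), if_neg hc2, if_neg]
        rintro ⟨hs, hieq⟩
        have heq : r = (w ++ [c]).drop i := by
          have := suffix_iff_eq_drop.mp hs
          rw [this, hlen]
          congr 1
          have h0 : 0 < r.length := List.length_pos_iff.mpr hr
          have := hs.length_le
          rw [hlen] at this
          omega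
        rw [List.drop_append_of_le_length hiw] at heq
        exact hc1 heq
  · have hieq : i = w.length + 1 := by omega
    have hd1 : (w ++ [c]).drop i = [] := List.drop_eq_nil_of_le (by simp; omega)
    have hd2 : w.drop i = [] := List.drop_eq_nil_of_le (by omega)
    rw [hd1, hd2, if_neg (fun hp => hr (List.prefix_nil.mp hp)), if_neg]
    rintro ⟨hs, hieq2⟩
    have h0 : 0 < r.length := List.length_pos_iff.mpr hr
    have := hs.length_le
    simp at this
    omega

end Aux
section Aux2
set_option linter.unusedSectionVars false
set_option linter.unusedVariables false
open List Finset

variable {α : Type*} [DecidableEq α] {s ℓ : ℕ}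

lemma mem_corrSet_iff {u v : List α} {t : ℕ} :
    t ∈ corrSet u v ↔ 1 ≤ t ∧ t ≤ u.length ∧ corrBit u v (u.length - t) := by
  simp [corrSet, Finset.mem_filter, Finset.mem_Icc, and_assoc]

lemma corrSet_le_of_not_infix {x v : List α} {t : ℕ}
    (hni : ¬ v <:+: x) (ht : t ∈ corrSet x v) : t ≤ v.length := by
  rw [mem_corrSet_iff] at ht
  obtain ⟨h1, h2, h3⟩ := ht
  rcases corrBit_cases h3 with hc | hc
  · exact absurd (infix_of_prefix_drop hc) hni
  · have := hc.length_le
    rw [List.length_drop] at this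
    omega

lemma corrSet_drop_eq {x v : List α} {t : ℕ}
    (ht : t ∈ corrSet x v) (hle : t ≤ v.length) :
    x.drop (x.length - t) = v.take t := by
  rw [mem_corrSet_iff] at ht
  obtain ⟨h1, h2, h3⟩ := ht
  have hdl : (x.drop (x.length - t)).length = t := by
    rw [List.length_drop]; omega
  rcases corrBit_cases h3 with hc | hc
  · have hvl := hc.length_le
    rw [hdl] at hvl
    have htv : t = v.length := le_antisymm hle hvl
    have : v = x.drop (x.length - t) := hc.eq_of_length (by omega)
    rw [← this, List.take_of_length_le (by omega)]
  · rw [prefix_iff_eq_take.mp hc, hdl]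

lemma mem_corrSet_of_suffix {x v w : List α} {t : ℕ}
    (hsuf : x <:+ w ++ v.take t) (h1 : 1 ≤ t) (hL : t ≤ v.length) (hx : t ≤ x.length) :
    t ∈ corrSet x v := by
  have hyl : (w ++ v.take t).length = w.length + t := by
    simp [List.length_take]; omega
  have hxl := hsuf.length_le
  rw [hyl] at hxl
  have hxd : x = (w ++ v.take t).drop (w.length + t - x.length) := by
    have := suffix_iff_eq_drop.mp hsuf
    rwa [hyl] at this
  have hdd : x.drop (x.length - t) = v.take t := by
    have h2 : x.drop (x.length - t)
        = ((w ++ v.take t).drop (w.length + t - x.length)).drop (x.length - t) := by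
      rw [← hxd]
    rw [h2, List.drop_drop]
    have harith : w.length + t - x.length + (x.length - t) = w.length := by omega
    rw [harith, List.drop_left]
  rw [mem_corrSet_iff]
  refine ⟨h1, hx, ?_⟩
  intro j hj
  have hmin : min (x.length - (x.length - t)) v.length = t := by omega
  rw [hmin] at hj
  have : x[(x.length - t) + j]? = (x.drop (x.length - t))[j]? := List.getElem?_drop.symm
  rw [this, hdd, List.getElem?_take]
  simp [hj]

lemma self_length_mem_corrSet {v : List α} (hv : v ≠ []) : v.length ∈ corrSet v v := by
  rw [mem_corrSet_iff]
  refine ⟨List.length_pos_iff.mpr hv, le_refl _, ?_⟩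
  intro j hj
  simp

-- suffix uniqueness lemmas
variable (F : Fin s → List α) (R : Fin ℓ → List α)

lemma suffix_FR {y : List α} {i : Fin s} {j : Fin ℓ}
    (hFR : ∀ i j, ¬ F i <:+: R j) (hRF : ∀ i j, ¬ R j <:+: F i)
    (h1 : F i <:+ y) (h2 : R j <:+ y) : False := by
  rcases suffix_or_suffix_of_suffix h1 h2 with h | h
  · exact hFR i j h.isInfix
  · exact hRF i j h.isInfix

lemma suffix_FF {y : List α} {i i' : Fin s}
    (hFF : ∀ i k, F i ≠ F k → ¬ F i <:+: F k)
    (h1 : F i <:+ y) (h2 : F i' <:+ y) : F i = F i' := by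
  by_contra hne
  rcases suffix_or_suffix_of_suffix h1 h2 with h | h
  · exact hFF i i' hne h.isInfix
  · exact hFF i' i (Ne.symm hne) h.isInfix

lemma suffix_RR {y : List α} {j j' : Fin ℓ}
    (hRR : ∀ j k, j ≠ k → ¬ R j <:+: R k)
    (h1 : R j <:+ y) (h2 : R j' <:+ y) : j = j' := by
  by_contra hne
  rcases suffix_or_suffix_of_suffix h1 h2 with h | h
  · exact hRR j j' hne h.isInfix
  · exact hRR j' j (Ne.symm hne) h.isInfix

lemma allowedI_of_prefix {y z : List α} (h : y <+: z) (hz : AllowedI F z) :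
    AllowedI F y := fun i hi => hz i (hi.trans h.isInfix)

lemma exists_suffix_of_not_allowed_snoc {y : List α} {c : α}
    (hy : AllowedI F y) (hyc : ¬ AllowedI F (y ++ [c])) :
    ∃ i, F i <:+ y ++ [c] := by
  rw [AllowedI] at hyc
  push_neg at hyc
  obtain ⟨i, hi⟩ := hyc
  obtain ⟨u, v, huv⟩ := hi
  rcases v.eq_nil_or_concat with rfl | ⟨v', a, rfl⟩
  · exact ⟨i, u, by simpa using huv⟩
  · exfalso
    apply hy i
    have : (u ++ F i ++ v') ++ [a] = y ++ [c] := by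
      rw [← huv]; simp
    obtain ⟨h1, h2⟩ := List.append_inj' this (by rfl)
    exact ⟨u, v', h1⟩

lemma exists_occ_of_not_allowed {y : List α} (hy : ¬ AllowedI F y) :
    ∃ h t, t + (F h).length ≤ y.length ∧ F h <+: y.drop t := by
  rw [AllowedI] at hy
  push_neg at hy
  obtain ⟨i, u, v, huv⟩ := hy
  refine ⟨i, u.length, ?_, ?_⟩
  · have := congrArg List.length huv
    simp at this
    omega
  · have : y.drop u.length = F i ++ v := by
      rw [← huv, List.append_assoc, List.drop_left]
    rw [this]
    exact (F i).prefix_append v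

lemma not_onlyEnd_of_extend {y v : List α} {a : List α}
    (hy : ¬ AllowedI F y) (hpre : y <+: v) (hlt : y.length < v.length) :
    ¬ OnlyEndForbidden F a v := by
  rintro ⟨hsuf, honly⟩
  obtain ⟨h, t, hle, hp⟩ := exists_occ_of_not_allowed F hy
  obtain ⟨rest, hrest⟩ := hpre
  have hdrop : F h <+: v.drop t := by
    rw [← hrest, List.drop_append_of_le_length (by omega)]
    exact hp.trans ((y.drop t).prefix_append rest)
  have := honly h t (by omega) hdrop
  obtain ⟨heq, hteq⟩ := this
  have hal := hsuf.length_le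
  rw [heq] at hle
  omega

lemma onlyEnd_snoc {y : List α} {c : α} {i : Fin s}
    (hFlen : ∀ i, 2 ≤ (F i).length)
    (hFF : ∀ i k, F i ≠ F k → ¬ F i <:+: F k)
    (hy : AllowedI F y) (hsuf : F i <:+ y ++ [c]) :
    OnlyEndForbidden F (F i) (y ++ [c]) := by
  refine ⟨hsuf, ?_⟩
  intro h t ht hp
  have hFh : F h ≠ [] := by
    intro hnil
    have := hFlen h
    rw [hnil] at this
    simp at this
  by_cases htl : t ≤ y.length
  · rw [List.drop_append_of_le_length htl, List.prefix_concat_iff] at hp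
    rcases hp with hp | hp
    · have hsufh : F h <:+ y ++ [c] := by
        rw [hp]
        exact suffix_append_singleton c (drop_suffix t y)
      have heq : F h = F i := suffix_FF F hFF hsufh hsuf
      refine ⟨heq, ?_⟩
      have hl : (F h).length = y.length - t + 1 := by
        rw [hp]; simp
      have hFi := hsuf.length_le
      simp only [List.length_append, List.length_cons, List.length_nil] at hFi ⊢
      rw [← heq]
      omega
    · exact absurd (infix_of_prefix_drop hp) (hy h)
  · exfalso
    have : (y ++ [c]).drop t = [] := List.drop_eq_nil_of_le (by simp; omega)
    rw [this, List.prefix_nil] at hp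
    exact hFh hp

lemma suffix_of_suffix_append {x w z : List α} (h : x <:+ w ++ z) (hl : x.length ≤ z.length) :
    x <:+ z := by
  have heq := suffix_iff_eq_drop.mp h
  rw [List.length_append] at heq
  have : w.length + z.length - x.length = w.length + (z.length - x.length) := by omega
  rw [this, List.drop_length_add_append] at heq
  rw [heq]
  exact drop_suffix _ _

end Aux2
/-- Real-valued multiplicity weight `∏_j m_j ^ occ(w, r_j)` (no allowedness condition). -/
def WtR {α : Type*} [DecidableEq α] {ℓ : ℕ} (R : Fin ℓ → List α) (m : Fin ℓ → ℕ)
    (w : List α) : ℝ :=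
  ∏ j, (m j : ℝ) ^ occ w (R j)

section Aux3
set_option linter.unusedSectionVars false
set_option linter.unusedVariables false
open List Finset

variable {α : Type*} [DecidableEq α] {s ℓ : ℕ}
variable (F : Fin s → List α) (R : Fin ℓ → List α) (m : Fin ℓ → ℕ)

lemma WtR_cast (w : List α) : ((∏ j, m j ^ occ w (R j) : ℕ) : ℝ) = WtR R m w := by
  rw [WtR]
  push_cast
  rfl

lemma WtR_snoc_none {y : List α} {c : α} (hRne : ∀ j, R j ≠ [])
    (h : ∀ j, ¬ R j <:+ y ++ [c]) : WtR R m (y ++ [c]) = WtR R m y := by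
  unfold WtR
  apply Finset.prod_congr rfl
  intro j _
  rw [occ_snoc y (R j) c (hRne j), if_neg (h j), add_zero]

lemma WtR_snoc_one {y : List α} {c : α} {j₀ : Fin ℓ} (hRne : ∀ j, R j ≠ [])
    (hRR : ∀ j k, j ≠ k → ¬ R j <:+: R k)
    (h : R j₀ <:+ y ++ [c]) : WtR R m (y ++ [c]) = (m j₀ : ℝ) * WtR R m y := by
  unfold WtR
  have key : ∀ j : Fin ℓ, ((m j : ℝ)) ^ occ (y ++ [c]) (R j)
      = (if j = j₀ then (m j : ℝ) else 1) * (m j : ℝ) ^ occ y (R j) := by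
    intro j
    rw [occ_snoc y (R j) c (hRne j)]
    by_cases hj : j = j₀
    · subst hj
      rw [if_pos h, if_pos rfl, pow_add, pow_one, mul_comm]
    · rw [if_neg (fun hs => hj (suffix_RR R hRR hs h)), if_neg hj, add_zero, one_mul]
  rw [Finset.prod_congr rfl (fun j _ => key j), Finset.prod_mul_distrib,
    Finset.prod_ite_eq' Finset.univ j₀ (fun j => (m j : ℝ)), if_pos (Finset.mem_univ j₀)]

lemma sum_filter_split (S : Finset ℕ) (e : ℕ) (G : ℕ → ℝ) :
    ∑ t ∈ S.filter (fun t => e < t), G t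
      = (∑ t ∈ S.filter (fun t => e + 1 < t), G t) + (if e + 1 ∈ S then G (e+1) else 0) := by
  rw [Finset.sum_filter, Finset.sum_filter]
  have : (if e + 1 ∈ S then G (e+1) else 0) = ∑ t ∈ S, if t = e + 1 then G t else 0 := by
    rw [Finset.sum_ite_eq' S (e+1) G]
  rw [this, ← Finset.sum_add_distrib]
  apply Finset.sum_congr rfl
  intro t _
  by_cases h1 : t = e + 1
  · subst h1
    simp
  · by_cases h2 : e < t
    · rw [if_pos h2, if_pos (by omega), if_neg h1, add_zero]
    · rw [if_neg h2, if_neg (by omega), if_neg h1, add_zero]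

end Aux3
section Chain
set_option linter.unusedSectionVars false
set_option linter.unusedVariables false
open List Finset

variable {α : Type*} [DecidableEq α] {s ℓ : ℕ}

lemma append_take_prefix (w v : List α) {a b : ℕ} (hab : a ≤ b) :
    w ++ v.take a <+: w ++ v.take b := by
  rw [List.prefix_append_right_inj]
  have h : v.take a = (v.take b).take a := by rw [List.take_take, min_eq_left hab]
  rw [h]
  exact take_prefix _ _

lemma chain (F : Fin s → List α) (R : Fin ℓ → List α) (m : Fin ℓ → ℕ)
    (hm : ∀ j, 2 ≤ m j)
    (hFlen : ∀ i, 2 ≤ (F i).length) (hFinj : Function.Injective F)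
    (hRne : ∀ j, R j ≠ [])
    (hFF : ∀ i k, F i ≠ F k → ¬ F i <:+: F k)
    (hRR : ∀ j k, j ≠ k → ¬ R j <:+: R k)
    (hFR : ∀ i j, ¬ F i <:+: R j)
    (hRF : ∀ i j, ¬ R j <:+: F i)
    (k : Fin ℓ) (w : List α) :
    ∀ d e, e + d = (R k).length → AllowedI F (w ++ (R k).take e) →
    WtR R m (w ++ (R k).take e)
      = (if AllowedI F (w ++ R k) then WtR R m (w ++ R k) else 0)
        + (∑ i, ∑ t ∈ (corrSet (F i) (R k)).filter (fun t' => e < t'),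
            (if OnlyEndForbidden F (F i) (w ++ (R k).take t) then
              WtR R m (w ++ (R k).take t) else 0))
        - (∑ j, ∑ t ∈ (corrSet (R j) (R k)).filter (fun t' => e < t'),
            (1 - 1/(m j : ℝ)) *
              (if AllowedI F (w ++ (R k).take t) ∧ R j <:+ w ++ (R k).take t then
                WtR R m (w ++ (R k).take t) else 0)) := by
  have hRle : ∀ (j : Fin ℓ) (t : ℕ), t ∈ corrSet (R j) (R k) → t ≤ (R k).length := by
    intro j t ht
    by_cases hjk : j = k
    · subst hjk
      exact (mem_corrSet_iff.mp ht).2.1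
    · exact corrSet_le_of_not_infix (hRR k j (fun h => hjk h.symm)) ht
  have hFle : ∀ (i : Fin s) (t : ℕ), t ∈ corrSet (F i) (R k) → t ≤ (R k).length :=
    fun i t ht => corrSet_le_of_not_infix (hRF i k) ht
  intro d
  induction d with
  | zero =>
    intro e he hall
    have he' : e = (R k).length := by omega
    subst he'
    rw [List.take_length] at hall ⊢
    have hFempty : ∀ i : Fin s,
        (corrSet (F i) (R k)).filter (fun t' => (R k).length < t') = ∅ := by
      intro i
      rw [Finset.filter_eq_empty_iff]
      intro t ht
      have := hFle i t ht
      omega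
    have hRempty : ∀ j : Fin ℓ,
        (corrSet (R j) (R k)).filter (fun t' => (R k).length < t') = ∅ := by
      intro j
      rw [Finset.filter_eq_empty_iff]
      intro t ht
      have := hRle j t ht
      omega
    simp only [hFempty, hRempty, Finset.sum_empty, Finset.sum_const_zero, if_pos hall]
    ring
  | succ d ih =>
    intro e he hall
    have heL : e < (R k).length := by omega
    have htake : (R k).take (e+1) = (R k).take e ++ [(R k)[e]] := by
      rw [List.take_succ]
      simp [List.getElem?_eq_getElem heL]
    have hy : w ++ (R k).take (e+1) = (w ++ (R k).take e) ++ [(R k)[e]] := by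
      rw [htake, List.append_assoc]
    have hlen_take : ∀ t, t ≤ (R k).length → ((R k).take t).length = t := by
      intro t h
      rw [List.length_take]
      omega
    -- split the sums
    have hFsplit : (∑ i, ∑ t ∈ (corrSet (F i) (R k)).filter (fun t' => e < t'),
            (if OnlyEndForbidden F (F i) (w ++ (R k).take t) then
              WtR R m (w ++ (R k).take t) else 0))
        = (∑ i, ∑ t ∈ (corrSet (F i) (R k)).filter (fun t' => e + 1 < t'),
            (if OnlyEndForbidden F (F i) (w ++ (R k).take t) then
              WtR R m (w ++ (R k).take t) else 0))
          + ∑ i, (if e + 1 ∈ corrSet (F i) (R k) then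
              (if OnlyEndForbidden F (F i) (w ++ (R k).take (e+1)) then
                WtR R m (w ++ (R k).take (e+1)) else 0) else 0) := by
      rw [← Finset.sum_add_distrib]
      exact Finset.sum_congr rfl fun i _ => sum_filter_split _ e _
    have hRsplit : (∑ j, ∑ t ∈ (corrSet (R j) (R k)).filter (fun t' => e < t'),
            (1 - 1/(m j : ℝ)) *
              (if AllowedI F (w ++ (R k).take t) ∧ R j <:+ w ++ (R k).take t then
                WtR R m (w ++ (R k).take t) else 0))
        = (∑ j, ∑ t ∈ (corrSet (R j) (R k)).filter (fun t' => e + 1 < t'),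
            (1 - 1/(m j : ℝ)) *
              (if AllowedI F (w ++ (R k).take t) ∧ R j <:+ w ++ (R k).take t then
                WtR R m (w ++ (R k).take t) else 0))
          + ∑ j, (if e + 1 ∈ corrSet (R j) (R k) then
              (1 - 1/(m j : ℝ)) *
              (if AllowedI F (w ++ (R k).take (e+1)) ∧ R j <:+ w ++ (R k).take (e+1) then
                WtR R m (w ++ (R k).take (e+1)) else 0) else 0) := by
      rw [← Finset.sum_add_distrib]
      exact Finset.sum_congr rfl fun j _ => sum_filter_split _ e _
    rw [hFsplit, hRsplit]
    by_cases hyAll : AllowedI F (w ++ (R k).take (e+1))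
    · -- the next prefix is still allowed
      have IH := ih (e+1) (by omega) hyAll
      have hFat : ∀ i : Fin s, (if e + 1 ∈ corrSet (F i) (R k) then
              (if OnlyEndForbidden F (F i) (w ++ (R k).take (e+1)) then
                WtR R m (w ++ (R k).take (e+1)) else 0) else 0) = 0 := by
        intro i
        have hno : ¬ OnlyEndForbidden F (F i) (w ++ (R k).take (e+1)) :=
          fun h => hyAll i h.1.isInfix
        rw [if_neg hno, ite_self]
      have hRat : (∑ j, (if e + 1 ∈ corrSet (R j) (R k) then
              (1 - 1/(m j : ℝ)) *
              (if AllowedI F (w ++ (R k).take (e+1)) ∧ R j <:+ w ++ (R k).take (e+1) then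
                WtR R m (w ++ (R k).take (e+1)) else 0) else 0))
          = WtR R m (w ++ (R k).take (e+1)) - WtR R m (w ++ (R k).take e) := by
        by_cases hex : ∃ j, R j <:+ w ++ (R k).take (e+1)
        · obtain ⟨j₀, hj₀⟩ := hex
          have hterm : ∀ j ∈ Finset.univ, (if e + 1 ∈ corrSet (R j) (R k) then
              (1 - 1/(m j : ℝ)) *
              (if AllowedI F (w ++ (R k).take (e+1)) ∧ R j <:+ w ++ (R k).take (e+1) then
                WtR R m (w ++ (R k).take (e+1)) else 0) else 0)
              = (if j = j₀ then (1 - 1/(m j₀ : ℝ)) * WtR R m (w ++ (R k).take (e+1)) else 0) := by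
            intro j _
            by_cases hj : j = j₀
            · subst hj
              have hlenj : e + 1 ≤ (R j).length := by
                by_contra hgt
                push_neg at hgt
                have hsj : R j <:+ (R k).take (e+1) :=
                  suffix_of_suffix_append hj₀ (by rw [hlen_take (e+1) (by omega)]; omega)
                have hinf : R j <:+: R k := hsj.isInfix.trans (take_prefix _ _).isInfix
                by_cases hjk : j = k
                · subst hjk; omega
                · exact hRR j k hjk hinf
              have hmem : e + 1 ∈ corrSet (R j) (R k) :=
                mem_corrSet_of_suffix hj₀ (by omega) (by omega) hlenj
              rw [if_pos hmem, if_pos ⟨hyAll, hj₀⟩, if_pos rfl]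
            · have hns : ¬ (AllowedI F (w ++ (R k).take (e+1)) ∧ R j <:+ w ++ (R k).take (e+1)) := by
                rintro ⟨-, hsj⟩
                exact hj (suffix_RR R hRR hsj hj₀)
              rw [if_neg hj]
              by_cases hmem : e + 1 ∈ corrSet (R j) (R k)
              · rw [if_pos hmem, if_neg hns, mul_zero]
              · rw [if_neg hmem]
          rw [Finset.sum_congr rfl hterm, Finset.sum_ite_eq' Finset.univ j₀
            (fun _ => (1 - 1/(m j₀ : ℝ)) * WtR R m (w ++ (R k).take (e+1))),
            if_pos (Finset.mem_univ j₀)]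
          have hj₀' : R j₀ <:+ (w ++ (R k).take e) ++ [(R k)[e]] := by rwa [← hy]
          have hWt : WtR R m (w ++ (R k).take (e+1)) = (m j₀ : ℝ) * WtR R m (w ++ (R k).take e) := by
            rw [hy]
            exact WtR_snoc_one R m hRne hRR hj₀'
          rw [hWt]
          have hm0 : (m j₀ : ℝ) ≠ 0 := by
            have := hm j₀
            positivity
          field_simp
        · push_neg at hex
          have hterm : ∀ j ∈ Finset.univ, (if e + 1 ∈ corrSet (R j) (R k) then
              (1 - 1/(m j : ℝ)) *
              (if AllowedI F (w ++ (R k).take (e+1)) ∧ R j <:+ w ++ (R k).take (e+1) then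
                WtR R m (w ++ (R k).take (e+1)) else 0) else 0) = (0:ℝ) := by
            intro j _
            by_cases hmem : e + 1 ∈ corrSet (R j) (R k)
            · rw [if_pos hmem, if_neg (fun hand => hex j hand.2), mul_zero]
            · rw [if_neg hmem]
          rw [Finset.sum_congr rfl hterm, Finset.sum_const_zero]
          have hWt : WtR R m (w ++ (R k).take (e+1)) = WtR R m (w ++ (R k).take e) := by
            rw [hy]
            exact WtR_snoc_none R m hRne (fun j hsj => hex j (by rwa [hy]))
          rw [hWt]
          ring
      rw [Finset.sum_congr rfl (fun i _ => hFat i), Finset.sum_const_zero, hRat]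
      rw [IH]
      ring
    · -- the next prefix is not allowed: forbidden word completes at position e+1
      have hpref_u : w ++ (R k).take (e+1) <+: w ++ R k := by
        have h := append_take_prefix w (R k) (show e+1 ≤ (R k).length by omega)
        rwa [List.take_length] at h
      have hu : ¬ AllowedI F (w ++ R k) := fun h => hyAll (allowedI_of_prefix F hpref_u h)
      rw [if_neg hu]
      -- tail F sums vanish
      have hFtail : ∀ i : Fin s, ∀ t ∈ (corrSet (F i) (R k)).filter (fun t' => e + 1 < t'),
          (if OnlyEndForbidden F (F i) (w ++ (R k).take t) then
              WtR R m (w ++ (R k).take t) else 0) = 0 := by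
        intro i t ht
        rw [Finset.mem_filter] at ht
        obtain ⟨htc, htgt⟩ := ht
        have htL := hFle i t htc
        have hpref : w ++ (R k).take (e+1) <+: w ++ (R k).take t :=
          append_take_prefix w (R k) (by omega)
        have hlt : (w ++ (R k).take (e+1)).length < (w ++ (R k).take t).length := by
          simp only [List.length_append, hlen_take (e+1) (by omega), hlen_take t htL]
          omega
        rw [if_neg (not_onlyEnd_of_extend F hyAll hpref hlt)]
      -- tail R sums vanish
      have hRtail : ∀ j : Fin ℓ, ∀ t ∈ (corrSet (R j) (R k)).filter (fun t' => e + 1 < t'),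
          (1 - 1/(m j : ℝ)) *
              (if AllowedI F (w ++ (R k).take t) ∧ R j <:+ w ++ (R k).take t then
                WtR R m (w ++ (R k).take t) else 0) = 0 := by
        intro j t ht
        rw [Finset.mem_filter] at ht
        obtain ⟨htc, htgt⟩ := ht
        have hpref : w ++ (R k).take (e+1) <+: w ++ (R k).take t :=
          append_take_prefix w (R k) (by omega)
        have hna : ¬ (AllowedI F (w ++ (R k).take t) ∧ R j <:+ w ++ (R k).take t) := by
          rintro ⟨ha, -⟩
          exact hyAll (allowedI_of_prefix F hpref ha)
        rw [if_neg hna, mul_zero]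
      -- R at-terms vanish
      have hRat : ∀ j : Fin ℓ, (if e + 1 ∈ corrSet (R j) (R k) then
              (1 - 1/(m j : ℝ)) *
              (if AllowedI F (w ++ (R k).take (e+1)) ∧ R j <:+ w ++ (R k).take (e+1) then
                WtR R m (w ++ (R k).take (e+1)) else 0) else 0) = 0 := by
        intro j
        by_cases hmem : e + 1 ∈ corrSet (R j) (R k)
        · rw [if_pos hmem, if_neg (fun hand => hyAll hand.1), mul_zero]
        · rw [if_neg hmem]
      -- F at-terms: the unique completed forbidden word
      have hyAll' : ¬ AllowedI F ((w ++ (R k).take e) ++ [(R k)[e]]) := by rwa [← hy]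
      obtain ⟨i₀, hi₀⟩ := exists_suffix_of_not_allowed_snoc F hall hyAll'
      have hi₀' : F i₀ <:+ w ++ (R k).take (e+1) := by rwa [← hy] at hi₀
      have hOE : OnlyEndForbidden F (F i₀) (w ++ (R k).take (e+1)) := by
        rw [hy]
        exact onlyEnd_snoc F hFlen hFF hall hi₀
      have hlenF : e + 1 ≤ (F i₀).length := by
        by_contra hgt
        push_neg at hgt
        have hsj : F i₀ <:+ (R k).take (e+1) :=
          suffix_of_suffix_append hi₀' (by rw [hlen_take (e+1) (by omega)]; omega)
        exact hFR i₀ k (hsj.isInfix.trans (take_prefix _ _).isInfix)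
      have hmem : e + 1 ∈ corrSet (F i₀) (R k) :=
        mem_corrSet_of_suffix hi₀' (by omega) (by omega) hlenF
      have hWt : WtR R m (w ++ (R k).take (e+1)) = WtR R m (w ++ (R k).take e) := by
        rw [hy]
        apply WtR_snoc_none R m hRne
        intro j hsj
        exact suffix_FR F R hFR hRF hi₀ hsj
      have hFat : ∀ i ∈ Finset.univ, (if e + 1 ∈ corrSet (F i) (R k) then
              (if OnlyEndForbidden F (F i) (w ++ (R k).take (e+1)) then
                WtR R m (w ++ (R k).take (e+1)) else 0) else 0)
          = (if i = i₀ then WtR R m (w ++ (R k).take e) else 0) := by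
        intro i _
        by_cases hi : i = i₀
        · subst hi
          rw [if_pos hmem, if_pos hOE, hWt, if_pos rfl]
        · have hno : ¬ OnlyEndForbidden F (F i) (w ++ (R k).take (e+1)) := by
            intro hoe
            exact hi (hFinj (suffix_FF F hFF hoe.1 hi₀'))
          rw [if_neg hno, ite_self, if_neg hi]
      have hz1 : (∑ i, ∑ t ∈ (corrSet (F i) (R k)).filter (fun t' => e + 1 < t'),
            (if OnlyEndForbidden F (F i) (w ++ (R k).take t) then
              WtR R m (w ++ (R k).take t) else 0)) = 0 :=
        Finset.sum_eq_zero (fun i _ => Finset.sum_eq_zero (hFtail i))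
      have hz2 : (∑ j, ∑ t ∈ (corrSet (R j) (R k)).filter (fun t' => e + 1 < t'),
            (1 - 1/(m j : ℝ)) *
              (if AllowedI F (w ++ (R k).take t) ∧ R j <:+ w ++ (R k).take t then
                WtR R m (w ++ (R k).take t) else 0)) = 0 :=
        Finset.sum_eq_zero (fun j _ => Finset.sum_eq_zero (hRtail j))
      rw [hz1, hz2, Finset.sum_congr rfl hFat,
        Finset.sum_ite_eq' Finset.univ i₀ (fun _ => WtR R m (w ++ (R k).take e)),
        if_pos (Finset.mem_univ i₀),
        Finset.sum_congr rfl (fun j _ => hRat j), Finset.sum_const_zero]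
      ring

end Chain
section Fibers
set_option linter.unusedSectionVars false
set_option linter.unusedVariables false
open List Finset

variable {α : Type*} [DecidableEq α] [Fintype α] {s ℓ : ℕ}

lemma sum_ofFn_split {a b : ℕ} (φ : List α → ℝ) :
    ∑ f : Fin (a+b) → α, φ (List.ofFn f)
      = ∑ g : Fin a → α, ∑ h : Fin b → α, φ (List.ofFn g ++ List.ofFn h) := by
  calc ∑ f : Fin (a+b) → α, φ (List.ofFn f)
      = ∑ p : (Fin a → α) × (Fin b → α), φ (List.ofFn p.1 ++ List.ofFn p.2) := by
        refine Fintype.sum_equiv ((Equiv.arrowCongr finSumFinEquiv (Equiv.refl α)).symm.trans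
          (Equiv.sumArrowEquivProdArrow (Fin a) (Fin b) α)) _ _ ?_
        intro f
        congr 1
        rw [List.ofFn_add]
        congr 1 <;> (funext i; simp [Equiv.sumArrowEquivProdArrow, Equiv.arrowCongr])
    _ = ∑ g : Fin a → α, ∑ h : Fin b → α, φ (List.ofFn g ++ List.ofFn h) :=
        Fintype.sum_prod_type _

lemma ofFn_sum_collapse {t : ℕ} (z : List α) (hz : z.length = t) (ψ : List α → ℝ) :
    ∑ h : Fin t → α, (if List.ofFn h = z then ψ (List.ofFn h) else 0) = ψ z := by
  subst hz
  have h₀ : List.ofFn z.get = z := List.ofFn_get z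
  have key : ∀ h : Fin z.length → α, (List.ofFn h = z) ↔ h = z.get := by
    intro h
    constructor
    · intro he
      apply List.ofFn_injective
      rw [he, h₀]
    · rintro rfl
      exact h₀
  calc ∑ h : Fin z.length → α, (if List.ofFn h = z then ψ (List.ofFn h) else 0)
      = ∑ h : Fin z.length → α, (if h = z.get then ψ (List.ofFn h) else 0) :=
        Finset.sum_congr rfl (fun h _ => if_congr (key h) rfl rfl)
    _ = ψ (List.ofFn z.get) :=
        (Finset.sum_ite_eq' Finset.univ z.get (fun h => ψ (List.ofFn h))).trans
          (if_pos (Finset.mem_univ _))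
    _ = ψ z := by rw [h₀]

lemma drop_eq_of_suffix {x y : List α} {n t : ℕ} (hsuf : x <:+ y) (hylen : y.length = n + t)
    (hx : t ≤ x.length) : y.drop n = x.drop (x.length - t) := by
  have hxy := hsuf.length_le
  have hxd : x = y.drop (y.length - x.length) := suffix_iff_eq_drop.mp hsuf
  have h2 : x.drop (x.length - t) = (y.drop (y.length - x.length)).drop (x.length - t) := by
    rw [← hxd]
  rw [h2, List.drop_drop]
  congr 1
  omega

variable (F : Fin s → List α) (R : Fin ℓ → List α) (m : Fin ℓ → ℕ)

lemma fa_fiber (hRF : ∀ i j, ¬ R j <:+: F i) (k : Fin ℓ) (i : Fin s) {t : ℕ}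
    (ht : t ∈ corrSet (F i) (R k)) (htL : t ≤ (R k).length) (n : ℕ) :
    (faCount F R m i (n + t) : ℝ)
      = ∑ g : Fin n → α,
          (if OnlyEndForbidden F (F i) (List.ofFn g ++ (R k).take t) then
            WtR R m (List.ofFn g ++ (R k).take t) else 0) := by
  have hocc0 : ∀ j, occ (F i) (R j) = 0 := fun j => occ_eq_zero (hRF i j)
  have hcast : ∀ v : List α,
      ((if OnlyEndForbidden F (F i) v then (∏ j, m j ^ (occ v (R j) - occ (F i) (R j))) else 0 : ℕ) : ℝ)
      = (if OnlyEndForbidden F (F i) v then WtR R m v else 0) := by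
    intro v
    split_ifs
    · simp only [hocc0, Nat.sub_zero]
      exact WtR_cast R m v
    · simp
  have h1 : (faCount F R m i (n + t) : ℝ)
      = ∑ f : Fin (n+t) → α, (if OnlyEndForbidden F (F i) (List.ofFn f) then
          WtR R m (List.ofFn f) else 0) := by
    rw [faCount, Nat.cast_sum]
    exact Finset.sum_congr rfl (fun f _ => hcast (List.ofFn f))
  rw [h1, sum_ofFn_split (fun v => if OnlyEndForbidden F (F i) v then WtR R m v else 0)]
  apply Finset.sum_congr rfl
  intro g _
  have hzlen : ((R k).take t).length = t := by
    rw [List.length_take]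
    omega
  have hstep : ∀ h : Fin t → α,
      (if OnlyEndForbidden F (F i) (List.ofFn g ++ List.ofFn h) then
        WtR R m (List.ofFn g ++ List.ofFn h) else 0)
      = (if List.ofFn h = (R k).take t then
          (if OnlyEndForbidden F (F i) (List.ofFn g ++ List.ofFn h) then
            WtR R m (List.ofFn g ++ List.ofFn h) else 0) else 0) := by
    intro h
    by_cases hh : List.ofFn h = (R k).take t
    · rw [if_pos hh]
    · rw [if_neg hh, if_neg]
      intro hoe
      apply hh
      have hvlen : (List.ofFn g ++ List.ofFn h).length = n + t := by simp
      have hdrop : (List.ofFn g ++ List.ofFn h).drop n = List.ofFn h := by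
        have := List.drop_left (l₁ := List.ofFn g) (l₂ := List.ofFn h)
        rwa [List.length_ofFn] at this
      have htx : t ≤ (F i).length := (mem_corrSet_iff.mp ht).2.1
      have := drop_eq_of_suffix hoe.1 hvlen htx
      rw [hdrop] at this
      rw [this, corrSet_drop_eq ht htL]
  rw [Finset.sum_congr rfl (fun h _ => hstep h)]
  exact ofFn_sum_collapse ((R k).take t) hzlen
    (fun l => if OnlyEndForbidden F (F i) (List.ofFn g ++ l) then WtR R m (List.ofFn g ++ l) else 0)

lemma g_fiber (k j : Fin ℓ) {t : ℕ}
    (ht : t ∈ corrSet (R j) (R k)) (htL : t ≤ (R k).length) (n : ℕ) :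
    (gCount F R m j (n + t) : ℝ)
      = ∑ g : Fin n → α,
          (if AllowedI F (List.ofFn g ++ (R k).take t) ∧ R j <:+ List.ofFn g ++ (R k).take t then
            WtR R m (List.ofFn g ++ (R k).take t) else 0) := by
  have hcast : ∀ v : List α,
      ((if R j <:+ v then multI F R m v else 0 : ℕ) : ℝ)
      = (if AllowedI F v ∧ R j <:+ v then WtR R m v else 0) := by
    intro v
    rw [multI]
    by_cases h1 : R j <:+ v
    · by_cases h2 : AllowedI F v
      · rw [if_pos h1, if_pos h2, if_pos ⟨h2, h1⟩]
        exact WtR_cast R m v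
      · rw [if_pos h1, if_neg h2, if_neg (fun hand => h2 hand.1)]
        simp
    · rw [if_neg h1, if_neg (fun hand => h1 hand.2)]
      simp
  have h1 : (gCount F R m j (n + t) : ℝ)
      = ∑ f : Fin (n+t) → α, (if AllowedI F (List.ofFn f) ∧ R j <:+ List.ofFn f then
          WtR R m (List.ofFn f) else 0) := by
    rw [gCount, Nat.cast_sum]
    exact Finset.sum_congr rfl (fun f _ => hcast (List.ofFn f))
  rw [h1, sum_ofFn_split (fun v => if AllowedI F v ∧ R j <:+ v then WtR R m v else 0)]
  apply Finset.sum_congr rfl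
  intro g _
  have hzlen : ((R k).take t).length = t := by
    rw [List.length_take]
    omega
  have hstep : ∀ h : Fin t → α,
      (if AllowedI F (List.ofFn g ++ List.ofFn h) ∧ R j <:+ List.ofFn g ++ List.ofFn h then
        WtR R m (List.ofFn g ++ List.ofFn h) else 0)
      = (if List.ofFn h = (R k).take t then
          (if AllowedI F (List.ofFn g ++ List.ofFn h) ∧ R j <:+ List.ofFn g ++ List.ofFn h then
            WtR R m (List.ofFn g ++ List.ofFn h) else 0) else 0) := by
    intro h
    by_cases hh : List.ofFn h = (R k).take t
    · rw [if_pos hh]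
    · rw [if_neg hh, if_neg]
      rintro ⟨-, hsuf⟩
      apply hh
      have hvlen : (List.ofFn g ++ List.ofFn h).length = n + t := by simp
      have hdrop : (List.ofFn g ++ List.ofFn h).drop n = List.ofFn h := by
        have := List.drop_left (l₁ := List.ofFn g) (l₂ := List.ofFn h)
        rwa [List.length_ofFn] at this
      have htx : t ≤ (R j).length := (mem_corrSet_iff.mp ht).2.1
      have := drop_eq_of_suffix hsuf hvlen htx
      rw [hdrop] at this
      rw [this, corrSet_drop_eq ht htL]
  rw [Finset.sum_congr rfl (fun h _ => hstep h)]
  exact ofFn_sum_collapse ((R k).take t) hzlen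
    (fun l => if AllowedI F (List.ofFn g ++ l) ∧ R j <:+ List.ofFn g ++ l then
      WtR R m (List.ofFn g ++ l) else 0)

lemma gk_fiber (hRne : ∀ j, R j ≠ []) (k : Fin ℓ) (n : ℕ) :
    (gCount F R m k (n + (R k).length) : ℝ)
      = ∑ g : Fin n → α,
          (if AllowedI F (List.ofFn g ++ R k) then WtR R m (List.ofFn g ++ R k) else 0) := by
  have := g_fiber F R m k k (self_length_mem_corrSet (hRne k)) (le_refl _) n
  rw [this]
  apply Finset.sum_congr rfl
  intro g _
  rw [List.take_length]
  congr 1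
  rw [eq_iff_iff]
  exact and_iff_left (List.suffix_append (List.ofFn g) (R k))

lemma f_cast (n : ℕ) :
    (fCount F R m n : ℝ)
      = ∑ g : Fin n → α, (if AllowedI F (List.ofFn g) then WtR R m (List.ofFn g) else 0) := by
  rw [fCount, Nat.cast_sum]
  apply Finset.sum_congr rfl
  intro g _
  rw [multI]
  split_ifs
  · exact WtR_cast R m _
  · simp

end Fibers

/-- if `F ∪ R` is reduced, then for each repeated word `r_k` and all `n ≥ 0`,
`f(n) = g_{r_k}(n+|r_k|) + ∑_i ∑_{0<t∈(a_i,r_k)} f_{a_i}(n+t)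
      − ∑_j ∑_{0<s∈(r_j,r_k)} (1−1/m_j)·g_{r_j}(n+s)`. -/
theorem second_recurrence {α : Type*} [DecidableEq α] [Fintype α] {s ℓ : ℕ}
    (F : Fin s → List α) (R : Fin ℓ → List α) (m : Fin ℓ → ℕ) (q : ℕ)
    (hq : q = Fintype.card α)
    (hm : ∀ j, 2 ≤ m j)
    (hFlen : ∀ i, 2 ≤ (F i).length) (hFinj : Function.Injective F)
    (hRne : ∀ j, R j ≠ [])
    (hFF : ∀ i k, F i ≠ F k → ¬ F i <:+: F k)
    (hRR : ∀ j k, j ≠ k → ¬ R j <:+: R k)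
    (hFR : ∀ i j, ¬ F i <:+: R j)
    (hRF : ∀ i j, ¬ R j <:+: F i)
    (k : Fin ℓ) (n : ℕ) :
    (fCount F R m n : ℝ) =
      gCount F R m k (n + (R k).length) +
        (∑ i, ∑ t ∈ corrSet (F i) (R k), (faCount F R m i (n + t) : ℝ)) -
        ∑ j, ∑ t ∈ corrSet (R j) (R k),
          (1 - 1 / (m j : ℝ)) * gCount F R m j (n + t) := by
  classical
  have hRle : ∀ (j : Fin ℓ) (t : ℕ), t ∈ corrSet (R j) (R k) → t ≤ (R k).length := by
    intro j t ht
    by_cases hjk : j = k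
    · subst hjk
      exact (mem_corrSet_iff.mp ht).2.1
    · exact corrSet_le_of_not_infix (hRR k j (fun h => hjk h.symm)) ht
  have hFle : ∀ (i : Fin s) (t : ℕ), t ∈ corrSet (F i) (R k) → t ≤ (R k).length :=
    fun i t ht => corrSet_le_of_not_infix (hRF i k) ht
  have hFA : (∑ i, ∑ t ∈ corrSet (F i) (R k), (faCount F R m i (n + t) : ℝ))
      = ∑ g : Fin n → α, ∑ i, ∑ t ∈ corrSet (F i) (R k),
          (if OnlyEndForbidden F (F i) (List.ofFn g ++ (R k).take t) then
            WtR R m (List.ofFn g ++ (R k).take t) else 0) := by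
    calc ∑ i, ∑ t ∈ corrSet (F i) (R k), (faCount F R m i (n + t) : ℝ)
        = ∑ i, ∑ t ∈ corrSet (F i) (R k), ∑ g : Fin n → α,
            (if OnlyEndForbidden F (F i) (List.ofFn g ++ (R k).take t) then
              WtR R m (List.ofFn g ++ (R k).take t) else 0) :=
          Finset.sum_congr rfl (fun i _ => Finset.sum_congr rfl (fun t ht =>
            fa_fiber F R m hRF k i ht (hFle i t ht) n))
      _ = ∑ i, ∑ g : Fin n → α, ∑ t ∈ corrSet (F i) (R k),
            (if OnlyEndForbidden F (F i) (List.ofFn g ++ (R k).take t) then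
              WtR R m (List.ofFn g ++ (R k).take t) else 0) :=
          Finset.sum_congr rfl (fun i _ => Finset.sum_comm)
      _ = _ := Finset.sum_comm
  have hRG : (∑ j, ∑ t ∈ corrSet (R j) (R k), (1 - 1 / (m j : ℝ)) * gCount F R m j (n + t))
      = ∑ g : Fin n → α, ∑ j, ∑ t ∈ corrSet (R j) (R k), (1 - 1 / (m j : ℝ)) *
          (if AllowedI F (List.ofFn g ++ (R k).take t) ∧ R j <:+ List.ofFn g ++ (R k).take t then
            WtR R m (List.ofFn g ++ (R k).take t) else 0) := by
    calc ∑ j, ∑ t ∈ corrSet (R j) (R k), (1 - 1 / (m j : ℝ)) * gCount F R m j (n + t)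
        = ∑ j, ∑ t ∈ corrSet (R j) (R k), ∑ g : Fin n → α, (1 - 1 / (m j : ℝ)) *
            (if AllowedI F (List.ofFn g ++ (R k).take t) ∧ R j <:+ List.ofFn g ++ (R k).take t then
              WtR R m (List.ofFn g ++ (R k).take t) else 0) :=
          Finset.sum_congr rfl (fun j _ => Finset.sum_congr rfl (fun t ht => by
            rw [g_fiber F R m k j ht (hRle j t ht) n, Finset.mul_sum]))
      _ = ∑ j, ∑ g : Fin n → α, ∑ t ∈ corrSet (R j) (R k), (1 - 1 / (m j : ℝ)) *
            (if AllowedI F (List.ofFn g ++ (R k).take t) ∧ R j <:+ List.ofFn g ++ (R k).take t then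
              WtR R m (List.ofFn g ++ (R k).take t) else 0) :=
          Finset.sum_congr rfl (fun j _ => Finset.sum_comm)
      _ = _ := Finset.sum_comm
  rw [f_cast F R m n, gk_fiber F R m hRne k n, hFA, hRG, ← Finset.sum_add_distrib,
    ← Finset.sum_sub_distrib]
  apply Finset.sum_congr rfl
  intro g _
  by_cases hall : AllowedI F (List.ofFn g)
  · have hch := chain F R m hm hFlen hFinj hRne hFF hRR hFR hRF k (List.ofFn g)
      (R k).length 0 (Nat.zero_add _) (by simpa using hall)
    rw [List.take_zero, List.append_nil] at hch
    have hFfilt : ∀ i : Fin s, (corrSet (F i) (R k)).filter (fun t' => 0 < t')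
        = corrSet (F i) (R k) :=
      fun i => Finset.filter_true_of_mem (fun t ht => (mem_corrSet_iff.mp ht).1)
    have hRfilt : ∀ j : Fin ℓ, (corrSet (R j) (R k)).filter (fun t' => 0 < t')
        = corrSet (R j) (R k) :=
      fun j => Finset.filter_true_of_mem (fun t ht => (mem_corrSet_iff.mp ht).1)
    simp only [hFfilt, hRfilt] at hch
    rw [if_pos hall]
    exact hch
  · rw [if_neg hall]
    have hB : (if AllowedI F (List.ofFn g ++ R k) then WtR R m (List.ofFn g ++ R k) else 0)
        = 0 :=
      if_neg (fun ha => hall (allowedI_of_prefix F (List.prefix_append _ _) ha))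
    have hC : (∑ i, ∑ t ∈ corrSet (F i) (R k),
          (if OnlyEndForbidden F (F i) (List.ofFn g ++ (R k).take t) then
            WtR R m (List.ofFn g ++ (R k).take t) else 0)) = 0 := by
      apply Finset.sum_eq_zero
      intro i _
      apply Finset.sum_eq_zero
      intro t ht
      have h1t : 1 ≤ t := (mem_corrSet_iff.mp ht).1
      have htL := hFle i t ht
      have hlt : (List.ofFn g).length < (List.ofFn g ++ (R k).take t).length := by
        rw [List.length_append, List.length_take]
        omega
      exact if_neg (not_onlyEnd_of_extend F hall (List.prefix_append _ _) hlt)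
    have hD : (∑ j, ∑ t ∈ corrSet (R j) (R k), (1 - 1 / (m j : ℝ)) *
          (if AllowedI F (List.ofFn g ++ (R k).take t) ∧ R j <:+ List.ofFn g ++ (R k).take t then
            WtR R m (List.ofFn g ++ (R k).take t) else 0)) = 0 := by
      apply Finset.sum_eq_zero
      intro j _
      apply Finset.sum_eq_zero
      intro t ht
      rw [if_neg (fun hand => hall (allowedI_of_prefix F (List.prefix_append _ _) hand.1)),
        mul_zero]
    rw [hB, hC, hD]
    ring
end

section
/- Let P be a row-stochastic matrix compatible with an irreducible 0–1 matrix Â (P_{XY} > 0 iff Â_{XY} = 1), with all entries of P rational. Write each nonzero entry as n_{XY}/d_{XY} in lowest terms and set L = lcm of all d_{XY}. Then A := L·P is a nonnegative integer matrix, irreducible, with Perron root L, right Perron eigenvector the all-ones vector, and the stochastic matrix V_Y·A_{XY}/(θ·V_X) built from A's Perron data equals P itself. -/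
lemma sp_pow_pos_iff {ι : Type*} [Fintype ι] [DecidableEq ι]
    (B C : Matrix ι ι ℕ) (h : ∀ x y, 0 < B x y ↔ 0 < C x y) :
    ∀ n x y, 0 < (B ^ n) x y ↔ 0 < (C ^ n) x y := by
  intro n
  induction n with
  | zero => intro x y; simp [Matrix.one_apply]
  | succ n ih =>
    intro x y
    simp only [pow_succ, Matrix.mul_apply]
    rw [pos_iff_ne_zero, pos_iff_ne_zero]
    simp only [Ne, Finset.sum_eq_zero_iff, Finset.mem_univ, true_imp_iff, not_forall,
      Nat.mul_eq_zero, not_or, ← pos_iff_ne_zero]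
    constructor
    · rintro ⟨z, hz1, hz2⟩; exact ⟨z, (ih x z).mp hz1, (h z y).mp hz2⟩
    · rintro ⟨z, hz1, hz2⟩; exact ⟨z, (ih x z).mpr hz1, (h z y).mpr hz2⟩

/-- let `P` be a row-stochastic matrix with rational entries compatible
with an irreducible 0–1 matrix `Â`, and let `L` be the lcm of the denominators of the
entries of `P`.  Then `A := L·P` is a nonnegative integer matrix, irreducible, with
Perron root `L` and right Perron eigenvector the all-ones vector, and the Shannon–Parry
stochastic matrix `A_{XY} V_Y/(θ V_X)` built from `A`'s Perron data is `P` itself. -/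
theorem rational_stochastic_is_shannon_parry {ι : Type*} [Fintype ι] [DecidableEq ι]
    [Nonempty ι]
    (Ahat : Matrix ι ι ℕ) (h01 : ∀ x y, Ahat x y ≤ 1)
    (hirr : ∀ x y, ∃ n : ℕ, 0 < n ∧ 0 < (Ahat ^ n) x y)
    (P : Matrix ι ι ℚ) (hPnn : ∀ x y, 0 ≤ P x y) (hProw : ∀ x, ∑ y, P x y = 1)
    (hcomp : ∀ x y, 0 < P x y ↔ Ahat x y = 1)
    (L : ℕ) (hL : L = Finset.univ.lcm fun q : ι × ι => (P q.1 q.2).den) :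
    ∃ A : Matrix ι ι ℕ,
      (∀ x y, (A x y : ℚ) = (L : ℚ) * P x y) ∧
      (∀ x y, ∃ n : ℕ, 0 < n ∧ 0 < (A ^ n) x y) ∧
      (Matrix.mulVec (A.map (Nat.cast : ℕ → ℚ)) (fun _ => 1) = fun _ => (L : ℚ)) ∧
      ∀ x y, (A x y : ℚ) * 1 / ((L : ℚ) * 1) = P x y := by
  have hLpos : 0 < L := by
    rw [hL, Nat.pos_iff_ne_zero]
    intro h0
    rw [Finset.lcm_eq_zero_iff] at h0
    obtain ⟨q, -, hq⟩ := h0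
    exact (P q.1 q.2).den_nz hq
  have hdvd : ∀ x y : ι, (P x y).den ∣ L := by
    intro x y
    rw [hL]
    exact Finset.dvd_lcm (Finset.mem_univ (x, y))
  set A : Matrix ι ι ℕ := fun x y => (L / (P x y).den) * (P x y).num.toNat with hAdef
  have hA : ∀ x y, (A x y : ℚ) = (L : ℚ) * P x y := by
    intro x y
    have hnum : ((P x y).num.toNat : ℤ) = (P x y).num :=
      Int.toNat_of_nonneg (Rat.num_nonneg.mpr (hPnn x y))
    have hden : ((P x y).den : ℚ) ≠ 0 := Nat.cast_ne_zero.mpr (P x y).den_nz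
    have hcastdiv : ((L / (P x y).den : ℕ) : ℚ) = (L : ℚ) / ((P x y).den : ℚ) :=
      Nat.cast_div (hdvd x y) hden
    have hnum' : ((P x y).num.toNat : ℚ) = ((P x y).num : ℚ) := by exact_mod_cast hnum
    rw [hAdef]
    push_cast [hcastdiv]
    rw [hnum']
    conv_rhs => rw [← Rat.num_div_den (P x y)]
    field_simp
  refine ⟨A, hA, ?_, ?_, ?_⟩
  · -- irreducibility
    have hiff : ∀ x y, 0 < A x y ↔ 0 < Ahat x y := by
      intro x y
      have h1 : 0 < A x y ↔ 0 < P x y := by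
        rw [← Nat.cast_pos (α := ℚ), hA]
        constructor
        · intro h
          by_contra hn
          push_neg at hn
          have : P x y = 0 := le_antisymm hn (hPnn x y)
          simp [this] at h
        · intro h
          positivity
      rw [h1, hcomp]
      have := h01 x y
      omega
    intro x y
    obtain ⟨n, hn, hpos⟩ := hirr x y
    exact ⟨n, hn, (sp_pow_pos_iff A Ahat hiff n x y).mpr hpos⟩
  · -- row sums
    funext x
    simp only [Matrix.mulVec, dotProduct, Matrix.map_apply, mul_one]
    rw [Finset.sum_congr rfl (fun y _ => hA x y), ← Finset.mul_sum, hProw x, mul_one]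
  · intro x y
    rw [hA, mul_one, mul_one]
    field_simp
end

section
/- Let Σ = {0,1,…,q-1}, F = ∅, and R consist of ℓ words of length 2 with multiplicities m_1,…,m_ℓ, and suppose all self-correlation polynomials satisfy (r_i,r_i)_z = z and all cross-correlations vanish: (r_i,r_j)_z = 0 for i ≠ j. Then the Perron root of the associated q×q adjacency matrix A (A_{xy} = m_i if xy = r_i, A_{xy} = 1 otherwise, rows/cols indexed by Σ with no forbidden entries) is θ = (q + √(q² + 4(α − ℓ)))/2, where α = m_1 + ⋯ + m_ℓ; i.e., θ is the largest real root of z − q − (α − ℓ)/z = 0. -/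
/-- let `Σ = {0,…,q-1}`, `F = ∅`, and let `R` consist of `ℓ` distinct
two-letter words `r i = (first, second)` with multiplicities `m i ≥ 2`, such that every
self-correlation polynomial is `z` (each `r i` has distinct letters) and all
cross-correlations vanish (`(r i).2 ≠ (r j).1` for `i ≠ j`, and the words are distinct).
Then the Perron root of the `q×q` adjacency matrix `A` (`A x y = m i` if `(x,y) = r i`,
`A x y = 1` otherwise) is `θ = (q + √(q² + 4(α − ℓ)))/2` with `α = ∑ m i`; in particular
`θ` is a root of `z² − qz − (α − ℓ)`, and `A` has a positive right eigenvector for `θ`. -/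
theorem perron_root_sparse_correlations (q ℓ : ℕ) (hq : 1 ≤ q)
    (r : Fin ℓ → Fin q × Fin q) (m : Fin ℓ → ℕ) (hm : ∀ i, 2 ≤ m i)
    (hrinj : Function.Injective r)
    (hself : ∀ i, (r i).1 ≠ (r i).2)
    (hcross : ∀ i j, i ≠ j → (r i).2 ≠ (r j).1)
    (α : ℕ) (hα : α = ∑ i, m i)
    (A : Matrix (Fin q) (Fin q) ℝ)
    (hA : ∀ x y, A x y = ∏ i, if r i = (x, y) then (m i : ℝ) else 1)
    (θ : ℝ) (hθ : θ = ((q : ℝ) + Real.sqrt ((q : ℝ) ^ 2 + 4 * ((α : ℝ) - ℓ))) / 2) :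
    (∃ V : Fin q → ℝ, (∀ x, 0 < V x) ∧ A.mulVec V = θ • V) ∧
      θ ^ 2 - (q : ℝ) * θ - ((α : ℝ) - ℓ) = 0 := by
  have hℓα : (ℓ : ℝ) ≤ (α : ℝ) := by
    have : ℓ ≤ α := by
      rw [hα]
      calc ℓ = ∑ _i : Fin ℓ, 1 := by simp
        _ ≤ ∑ i, m i := Finset.sum_le_sum fun i _ => by linarith [hm i]
    exact_mod_cast this
  have hD : (0:ℝ) ≤ (q:ℝ)^2 + 4*((α:ℝ) - ℓ) := by nlinarith [sq_nonneg ((q:ℝ))]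
  have hs2 : Real.sqrt ((q:ℝ)^2 + 4*((α:ℝ) - ℓ)) ^ 2 = (q:ℝ)^2 + 4*((α:ℝ) - ℓ) :=
    Real.sq_sqrt hD
  have hsnn : 0 ≤ Real.sqrt ((q:ℝ)^2 + 4*((α:ℝ) - ℓ)) := Real.sqrt_nonneg _
  have hq1 : (1:ℝ) ≤ (q:ℝ) := by exact_mod_cast hq
  have hquad : θ ^ 2 - (q : ℝ) * θ - ((α : ℝ) - ℓ) = 0 := by
    rw [hθ]; nlinarith [hs2]
  have hθpos : 0 < θ := by rw [hθ]; linarith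
  -- the eigenvector
  set c : Fin q → ℝ := fun x => ∑ i, if (r i).1 = x then (m i : ℝ) - 1 else 0 with hc
  have hcnn : ∀ x, 0 ≤ c x := fun x =>
    Finset.sum_nonneg fun i _ => by
      by_cases h : (r i).1 = x
      · simp only [h, if_true]; have := hm i; have : (2:ℝ) ≤ (m i : ℝ) := by exact_mod_cast this
        linarith
      · simp [h]
  set V : Fin q → ℝ := fun x => θ + c x with hV
  -- total sum of c
  have hcsum : ∑ x, c x = (α : ℝ) - ℓ := by
    rw [hc]
    rw [Finset.sum_comm]
    have : ∀ i : Fin ℓ, ∑ x, (if (r i).1 = x then (m i : ℝ) - 1 else 0) = (m i : ℝ) - 1 := by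
      intro i
      simp
    rw [Finset.sum_congr rfl fun i _ => this i]
    rw [hα]; push_cast; rw [Finset.sum_sub_distrib]; simp
  have hSsum : ∑ x, V x = (q : ℝ) * θ + ((α : ℝ) - ℓ) := by
    simp only [hV, Finset.sum_add_distrib, hcsum, Finset.sum_const, Finset.card_univ,
      Fintype.card_fin, nsmul_eq_mul]
  -- A entries
  have hA' : ∀ x y, A x y = 1 + ∑ i, if r i = (x, y) then (m i : ℝ) - 1 else 0 := by
    intro x y
    rw [hA]
    by_cases h : ∃ i, r i = (x, y)
    · obtain ⟨i, hi⟩ := h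
      rw [Finset.prod_eq_single i, Finset.sum_eq_single i]
      · simp [hi]
      · intro j _ hj
        have : r j ≠ (x, y) := fun hrj => hj (hrinj (hrj.trans hi.symm))
        simp [this]
      · simp
      · intro j _ hj
        have : r j ≠ (x, y) := fun hrj => hj (hrinj (hrj.trans hi.symm))
        simp [this]
      · simp
    · push_neg at h
      rw [Finset.prod_eq_one fun j _ => by simp [h j],
        Finset.sum_eq_zero fun j _ => by simp [h j]]
      norm_num
  -- V at second letters is θ
  have hVsecond : ∀ i, V ((r i).2) = θ := by
    intro i
    have : c ((r i).2) = 0 := by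
      rw [hc]
      refine Finset.sum_eq_zero fun j _ => ?_
      have : (r j).1 ≠ (r i).2 := by
        by_cases hij : i = j
        · subst hij; exact hself i
        · exact fun h => hcross i j hij h.symm
      simp [this]
    simp [hV, this]
  refine ⟨⟨V, fun x => by have := hcnn x; simp only [hV]; linarith, ?_⟩, hquad⟩
  funext x
  have hmul : A.mulVec V x = ∑ y, A x y * V y := rfl
  have key : ∀ y, A x y * V y = V y + ∑ i, if r i = (x, y) then ((m i : ℝ) - 1) * V y else 0 := by
    intro y
    rw [hA' x y, add_mul, one_mul, Finset.sum_mul]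
    congr 1
    refine Finset.sum_congr rfl fun i _ => ?_
    by_cases h : r i = (x, y) <;> simp [h]
  have inner : ∀ i : Fin ℓ, (∑ y, if r i = (x, y) then ((m i : ℝ) - 1) * V y else 0)
      = if (r i).1 = x then ((m i : ℝ) - 1) * θ else 0 := by
    intro i
    by_cases h1 : (r i).1 = x
    · rw [Finset.sum_eq_single ((r i).2)]
      · have : r i = (x, (r i).2) := by
          rw [← h1]
        rw [if_pos this, if_pos h1, hVsecond i]
      · intro y _ hy
        have : r i ≠ (x, y) := by
          intro h; apply hy; rw [h]
        simp [this]
      · simp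
    · rw [if_neg h1]
      refine Finset.sum_eq_zero fun y _ => ?_
      have : r i ≠ (x, y) := fun h => h1 (by rw [h])
      simp [this]
  have step : A.mulVec V x = (∑ y, V y) + ∑ i, if (r i).1 = x then ((m i : ℝ) - 1) * θ else 0 := by
    rw [hmul]
    rw [Finset.sum_congr rfl fun y _ => key y, Finset.sum_add_distrib]
    congr 1
    rw [Finset.sum_comm]
    exact Finset.sum_congr rfl fun i _ => inner i
  have hcx : ∑ i, (if (r i).1 = x then ((m i : ℝ) - 1) * θ else 0) = θ * c x := by
    rw [hc, Finset.mul_sum]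
    refine Finset.sum_congr rfl fun i _ => ?_
    by_cases h : (r i).1 = x <;> simp [h, mul_comm]
  rw [step, hSsum, hcx]
  simp only [Pi.smul_apply, smul_eq_mul, hV]
  nlinarith [hquad]
end
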